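/- arXiv:1210.4778 — 3 statements merged into one kernel-verified Lean document; each statement's English description precedes it below -/
import Mathlib

section
/- Let n ≥ 2, let P be an n×n column stochastic matrix with P_{jj} > 0 for all j and such that for every pair (j, i) there exists m ≥ 1 with (P^m)_{ji} > 0, let τ̄ ∈ ℕ, and let τ(k, j, i) ∈ {0, …, τ̄} be delay functions with τ(k, j, j) = 0. Let p_min > 0 be the minimum over all strictly positive entries of P. Then for any k ≥ 0 and any integer ℓ ≥ n(τ̄+1), the word B = P̄[k+ℓ] ⋯ P̄[k+1] has all entries in its first n rows strictly positive, and each such entry is at least p_min^{n(τ̄+1)}. -/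
open Matrix Filter

/-- An `N × N` real matrix is column stochastic if all entries are nonnegative and
each column sums to `1`. -/
def ColStoch {N : Type*} [Fintype N] (A : Matrix N N ℝ) : Prop :=
  (∀ j i, 0 ≤ A j i) ∧ ∀ i, ∑ j, A j i = 1

/-- The augmented `(τ̄+1)n × (τ̄+1)n` matrix `P̄[k]`, indexed by pairs `(r, j)` where
`r ∈ Fin (τ̄+1)` is the block (virtual-delay) index and `j ∈ Fin n` is the node index.
Block column `0` contains the blocks `P_r[k]` (with `P_r[k](j,i) = P(j,i)` if
`τ(k,j,i) = r` and `0` otherwise); the block in block-row `s-1`, block-column `s`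
is the identity for `s = 1, …, τ̄`; all other blocks are zero. -/
def AugMat (n τbar : ℕ) (P : Matrix (Fin n) (Fin n) ℝ)
    (τ : ℕ → Fin n → Fin n → ℕ) (k : ℕ) :
    Matrix (Fin (τbar + 1) × Fin n) (Fin (τbar + 1) × Fin n) ℝ :=
  fun q p =>
    if p.1.val = 0 then (if τ k q.2 p.2 = q.1.val then P q.2 p.2 else 0)
    else if q.1.val + 1 = p.1.val ∧ q.2 = p.2 then 1 else 0

/-- The word `P̄[k+ℓ] ⋯ P̄[k+2] ⬝ P̄[k+1]` of `ℓ` consecutive augmented matrices. -/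
def Word (n τbar : ℕ) (P : Matrix (Fin n) (Fin n) ℝ)
    (τ : ℕ → Fin n → Fin n → ℕ) (k : ℕ) :
    ℕ → Matrix (Fin (τbar + 1) × Fin n) (Fin (τbar + 1) × Fin n) ℝ
  | 0 => 1
  | ℓ + 1 => AugMat n τbar P τ (k + ℓ + 1) * Word n τbar P τ k ℓ

/-- A column stochastic matrix `B` is SIA if its powers `B^m` converge (entrywise)
to a matrix of the form `c ⬝ 𝟙ᵀ` for some nonnegative vector `c`. -/
def IsSIA {N : Type*} [Fintype N] [DecidableEq N] (B : Matrix N N ℝ) : Prop :=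
  ColStoch B ∧ ∃ c : N → ℝ, (∀ j, 0 ≤ c j) ∧
    Tendsto (fun m => B ^ m) atTop (nhds (Matrix.of fun j _ => c j))

lemma colStoch_one {N : Type*} [Fintype N] [DecidableEq N] : ColStoch (1 : Matrix N N ℝ) := by
  constructor
  · intro j i
    by_cases h : j = i <;> simp [Matrix.one_apply, h]
  · intro i
    simp [Matrix.one_apply]

lemma colStoch_mul {N : Type*} [Fintype N] (A B : Matrix N N ℝ)
    (hA : ColStoch A) (hB : ColStoch B) : ColStoch (A * B) := by
  constructor
  · intro j i
    rw [Matrix.mul_apply]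
    exact Finset.sum_nonneg fun x _ => mul_nonneg (hA.1 _ _) (hB.1 _ _)
  · intro i
    simp only [Matrix.mul_apply]
    rw [Finset.sum_comm]
    have h : ∀ x, ∑ j, A j x * B x i = B x i := fun x => by
      rw [← Finset.sum_mul, hA.2, one_mul]
    simp_rw [h]
    exact hB.2 i

lemma colStoch_pow {N : Type*} [Fintype N] [DecidableEq N] (P : Matrix N N ℝ)
    (hP : ColStoch P) : ∀ t, ColStoch (P ^ t) := by
  intro t
  induction t with
  | zero => rw [pow_zero]; exact colStoch_one
  | succ t ih => rw [pow_succ]; exact colStoch_mul _ _ ih hP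

lemma entry_le_mul {N : Type*} [Fintype N] (A B : Matrix N N ℝ)
    (hA : ∀ a b, 0 ≤ A a b) (hB : ∀ a b, 0 ≤ B a b) (q x p : N) :
    A q x * B x p ≤ (A * B) q p := by
  rw [Matrix.mul_apply]
  exact Finset.single_le_sum (f := fun y => A q y * B y p)
    (fun y _ => mul_nonneg (hA _ _) (hB _ _)) (Finset.mem_univ x)

lemma colStoch_aug (n τbar : ℕ) (P : Matrix (Fin n) (Fin n) ℝ)
    (τ : ℕ → Fin n → Fin n → ℕ) (hP : ColStoch P)
    (hτle : ∀ k j i, τ k j i ≤ τbar) (k : ℕ) :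
    ColStoch (AugMat n τbar P τ k) := by
  constructor
  · intro q p
    unfold AugMat
    split
    · split
      · exact hP.1 _ _
      · exact le_refl 0
    · split <;> norm_num
  · rintro ⟨s, i⟩
    by_cases hs : s.val = 0
    · have : ∀ q : Fin (τbar+1) × Fin n, AugMat n τbar P τ k q (s, i)
          = if τ k q.2 i = q.1.val then P q.2 i else 0 := by
        intro q; unfold AugMat; rw [if_pos hs]
      simp_rw [this]
      rw [Fintype.sum_prod_type, Finset.sum_comm]
      have h : ∀ j : Fin n,
          (∑ r : Fin (τbar+1), if τ k j i = r.val then P j i else 0) = P j i := by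
        intro j
        rw [Finset.sum_eq_single (⟨τ k j i, Nat.lt_succ_of_le (hτle k j i)⟩ : Fin (τbar+1))]
        · simp
        · intro r _ hne
          rw [if_neg]
          intro hc
          exact hne (Fin.ext hc.symm)
        · intro h; exact absurd (Finset.mem_univ _) h
      simp_rw [h]
      exact hP.2 i
    · have : ∀ q : Fin (τbar+1) × Fin n, AugMat n τbar P τ k q (s, i)
          = if q.1.val + 1 = s.val ∧ q.2 = i then 1 else 0 := by
        intro q; unfold AugMat; rw [if_neg hs]
      simp_rw [this]
      rw [Finset.sum_eq_single ((⟨s.val - 1, by have := s.isLt; omega⟩ : Fin (τbar+1)), i)]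
      · rw [if_pos ⟨show s.val - 1 + 1 = s.val by omega, rfl⟩]
      · rintro ⟨r, j⟩ _ hne
        rw [if_neg]
        rintro ⟨h1, h2⟩
        apply hne
        subst h2
        have h1' : r.val + 1 = s.val := h1
        have : r = (⟨s.val - 1, by have := s.isLt; omega⟩ : Fin (τbar+1)) := Fin.ext (show r.val = s.val - 1 by omega)
        rw [this]
      · intro h; exact absurd (Finset.mem_univ _) h

lemma colStoch_word (n τbar : ℕ) (P : Matrix (Fin n) (Fin n) ℝ)
    (τ : ℕ → Fin n → Fin n → ℕ) (hP : ColStoch P)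
    (hτle : ∀ k j i, τ k j i ≤ τbar) (k : ℕ) :
    ∀ ℓ, ColStoch (Word n τbar P τ k ℓ) := by
  intro ℓ
  induction ℓ with
  | zero => exact colStoch_one
  | succ ℓ ih =>
    show ColStoch (AugMat n τbar P τ (k + ℓ + 1) * Word n τbar P τ k ℓ)
    exact colStoch_mul _ _ (colStoch_aug n τbar P τ hP hτle _) ih

lemma word_add (n τbar : ℕ) (P : Matrix (Fin n) (Fin n) ℝ)
    (τ : ℕ → Fin n → Fin n → ℕ) :
    ∀ (a b k : ℕ), Word n τbar P τ k (a + b)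
      = Word n τbar P τ (k + b) a * Word n τbar P τ k b := by
  intro a
  induction a with
  | zero =>
    intro b k
    rw [Nat.zero_add]
    show Word n τbar P τ k b = (1 : Matrix _ _ ℝ) * Word n τbar P τ k b
    rw [one_mul]
  | succ a ih =>
    intro b k
    have h1 : a + 1 + b = (a + b) + 1 := by omega
    rw [h1]
    show AugMat n τbar P τ (k + (a + b) + 1) * Word n τbar P τ k (a + b)
      = Word n τbar P τ (k + b) (a + 1) * Word n τbar P τ k b
    rw [ih]
    show _ = AugMat n τbar P τ ((k + b) + a + 1) * Word n τbar P τ (k + b) a * Word n τbar P τ k b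
    rw [show k + (a + b) + 1 = (k + b) + a + 1 by omega, mul_assoc]

lemma reach (n : ℕ) (hn : 2 ≤ n) (P : Matrix (Fin n) (Fin n) ℝ) (hP : ColStoch P)
    (hdiag : ∀ j, 0 < P j j)
    (hirr : ∀ j i : Fin n, ∃ m : ℕ, 1 ≤ m ∧ 0 < (P ^ m) j i) :
    ∀ j i : Fin n, 0 < (P ^ (n - 1)) j i := by
  classical
  have hnn : ∀ (t : ℕ) (j i : Fin n), 0 ≤ (P ^ t) j i := fun t => (colStoch_pow P hP t).1
  intro j
  set R : ℕ → Finset (Fin n) :=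
    fun t => Finset.filter (fun i => 0 < (P ^ t) j i) Finset.univ with hR
  have hmem : ∀ (t : ℕ) (i : Fin n), i ∈ R t ↔ 0 < (P ^ t) j i := by
    intro t i; simp [hR]
  have hcomp : ∀ (t : ℕ) (x i : Fin n), 0 < (P ^ t) j x → 0 < P x i → i ∈ R (t + 1) := by
    intro t x i h1 h2
    rw [hmem, pow_succ, Matrix.mul_apply]
    exact Finset.sum_pos' (fun y _ => mul_nonneg (hnn _ _ _) (hP.1 _ _))
      ⟨x, Finset.mem_univ x, mul_pos h1 h2⟩
  have hmono : Monotone R :=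
    monotone_nat_of_le_succ fun t i hi => hcomp t i i ((hmem t i).1 hi) (hdiag i)
  have hstep : ∀ (t : ℕ) (i : Fin n), i ∈ R (t + 1) → ∃ x, x ∈ R t ∧ 0 < P x i := by
    intro t i hi
    rw [hmem, pow_succ, Matrix.mul_apply] at hi
    obtain ⟨x, -, hx⟩ :=
      Finset.exists_lt_of_sum_lt (f := fun _ : Fin n => (0 : ℝ)) (by simpa using hi)
    rcases mul_pos_iff.mp hx with ⟨h1, h2⟩ | ⟨h1, h2⟩
    · exact ⟨x, (hmem t x).2 h1, h2⟩
    · exact absurd h1 (not_lt.mpr (hnn _ _ _))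
  have hstab : ∀ t : ℕ, R (t + 1) ⊆ R t → ∀ m : ℕ, R (t + m) ⊆ R t := by
    intro t hsub m
    induction m with
    | zero => exact subset_rfl
    | succ m ih =>
      intro i hi
      obtain ⟨x, hx1, hx2⟩ := hstep (t + m) i hi
      exact hsub (hcomp t x i ((hmem t x).1 (ih hx1)) hx2)
  have huniv : ∀ t : ℕ, R (t + 1) ⊆ R t → R t = Finset.univ := by
    intro t hsub
    apply Finset.eq_univ_of_forall
    intro i
    obtain ⟨m, _, hm2⟩ := hirr j i
    have him : i ∈ R m := (hmem m i).2 hm2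
    rcases le_or_gt m t with h | h
    · exact hmono h him
    · have h2 := hstab t hsub (m - t)
      rw [Nat.add_sub_cancel' h.le] at h2
      exact h2 him
  have hgrow : ∀ t : ℕ, R t = Finset.univ ∨ t + 1 ≤ (R t).card := by
    intro t
    induction t with
    | zero =>
      right
      have hj : j ∈ R 0 := (hmem 0 j).2 (by simp [Matrix.one_apply_eq])
      exact Finset.card_pos.mpr ⟨j, hj⟩
    | succ t ih =>
      rcases ih with h | h
      · exact Or.inl (Finset.univ_subset_iff.mp (h ▸ hmono (Nat.le_succ t)))
      · by_cases hsub : R (t + 1) ⊆ R t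
        · exact Or.inl (Finset.univ_subset_iff.mp
            ((huniv t hsub) ▸ hmono (Nat.le_succ t)))
        · right
          obtain ⟨x, hx1, hx2⟩ := Finset.not_subset.mp hsub
          have hss : R t ⊂ R (t + 1) :=
            (Finset.ssubset_iff_of_subset (hmono (Nat.le_succ t))).mpr ⟨x, hx1, hx2⟩
          have := Finset.card_lt_card hss
          omega
  intro i
  rcases hgrow (n - 1) with h | h
  · exact (hmem _ i).1 (h ▸ Finset.mem_univ i)
  · have hle := Finset.card_le_univ (R (n - 1))
    rw [Fintype.card_fin] at hle
    have hcard : (R (n - 1)).card = Fintype.card (Fin n) := by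
      rw [Fintype.card_fin]; omega
    exact (hmem _ i).1 ((Finset.eq_univ_of_card _ hcard) ▸ Finset.mem_univ i)

lemma aug_col0 (n τbar : ℕ) (P : Matrix (Fin n) (Fin n) ℝ)
    (τ : ℕ → Fin n → Fin n → ℕ) (k : ℕ) (r : Fin (τbar + 1)) (x i : Fin n)
    (h : τ k x i = r.val) :
    AugMat n τbar P τ k (r, x) ((0 : Fin (τbar + 1)), i) = P x i := by
  unfold AugMat
  rw [if_pos (show ((0 : Fin (τbar + 1)), i).1.val = 0 from rfl), if_pos h]

lemma aug_id (n τbar : ℕ) (P : Matrix (Fin n) (Fin n) ℝ)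
    (τ : ℕ → Fin n → Fin n → ℕ) (k : ℕ) (a b : Fin (τbar + 1)) (i : Fin n)
    (h1 : b.val ≠ 0) (h2 : a.val + 1 = b.val) :
    AugMat n τbar P τ k (a, i) (b, i) = 1 := by
  unfold AugMat
  rw [if_neg h1, if_pos ⟨h2, rfl⟩]

lemma word_split (n τbar : ℕ) (P : Matrix (Fin n) (Fin n) ℝ) (τ : ℕ → Fin n → Fin n → ℕ)
    (k a t : ℕ) (h : a ≤ t) :
    Word n τbar P τ k t = Word n τbar P τ (k + a) (t - a) * Word n τbar P τ k a := by
  conv_lhs => rw [show t = (t - a) + a by omega]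
  rw [word_add]

lemma descent (n τbar : ℕ) (P : Matrix (Fin n) (Fin n) ℝ) (τ : ℕ → Fin n → Fin n → ℕ)
    (hP : ColStoch P) (hτle : ∀ k j i, τ k j i ≤ τbar) (k' : ℕ) :
    ∀ (m : ℕ) (i : Fin n) (s : Fin (τbar + 1)), m ≤ s.val →
      1 ≤ Word n τbar P τ k' m
        ((⟨s.val - m, by have := s.isLt; omega⟩ : Fin (τbar + 1)), i) (s, i) := by
  intro m
  induction m with
  | zero =>
    intro i s _
    have he : ((⟨s.val - 0, by have := s.isLt; omega⟩ : Fin (τbar + 1)), i) = (s, i) := by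
      rw [Prod.mk.injEq]
      exact ⟨Fin.ext (Nat.sub_zero _), rfl⟩
    rw [show Word n τbar P τ k' 0 = 1 from rfl, he, Matrix.one_apply_eq]
  | succ m ih =>
    intro i s h
    have hs := s.isLt
    have hW := colStoch_word n τbar P τ hP hτle k' m
    have hA := colStoch_aug n τbar P τ hP hτle (k' + m + 1)
    have key := entry_le_mul (AugMat n τbar P τ (k' + m + 1)) (Word n τbar P τ k' m)
      hA.1 hW.1 ((⟨s.val - (m + 1), by omega⟩ : Fin (τbar + 1)), i)
      ((⟨s.val - m, by omega⟩ : Fin (τbar + 1)), i) (s, i)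
    have hAe : AugMat n τbar P τ (k' + m + 1)
        ((⟨s.val - (m + 1), by omega⟩ : Fin (τbar + 1)), i)
        ((⟨s.val - m, by omega⟩ : Fin (τbar + 1)), i) = 1 :=
      aug_id n τbar P τ (k' + m + 1) _ _ i (show s.val - m ≠ 0 by omega)
        (show s.val - (m + 1) + 1 = s.val - m by omega)
    rw [hAe, one_mul] at key
    exact le_trans (ih i s (by omega)) key

lemma descent0 (n τbar : ℕ) (P : Matrix (Fin n) (Fin n) ℝ) (τ : ℕ → Fin n → Fin n → ℕ)
    (hP : ColStoch P) (hτle : ∀ k j i, τ k j i ≤ τbar) (k' : ℕ)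
    (s : Fin (τbar + 1)) (i : Fin n) :
    1 ≤ Word n τbar P τ k' s.val ((0 : Fin (τbar + 1)), i) (s, i) := by
  have h := descent n τbar P τ hP hτle k' s.val i s (le_refl _)
  have he : ((⟨s.val - s.val, by have := s.isLt; omega⟩ : Fin (τbar + 1)), i)
      = ((0 : Fin (τbar + 1)), i) := by
    rw [Prod.mk.injEq]
    exact ⟨Fin.ext (by simp), rfl⟩
  rwa [he] at h

lemma selfloop (n τbar : ℕ) (P : Matrix (Fin n) (Fin n) ℝ) (τ : ℕ → Fin n → Fin n → ℕ)
    (hP : ColStoch P) (hdiag : ∀ j, 0 < P j j) (hτle : ∀ k j i, τ k j i ≤ τbar)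
    (hτself : ∀ k j, τ k j j = 0)
    (pmin : ℝ) (hpmin : IsLeast {x : ℝ | ∃ j i : Fin n, 0 < P j i ∧ P j i = x} pmin) :
    ∀ (k' t : ℕ) (j : Fin n),
      pmin ^ t ≤ Word n τbar P τ k' t ((0 : Fin (τbar + 1)), j) ((0 : Fin (τbar + 1)), j) := by
  have hp0 : 0 < pmin := by obtain ⟨a, b, h1, h2⟩ := hpmin.1; exact h2 ▸ h1
  intro k' t j
  induction t with
  | zero => rw [pow_zero, show Word n τbar P τ k' 0 = 1 from rfl, Matrix.one_apply_eq]
  | succ t ih =>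
    have hW := colStoch_word n τbar P τ hP hτle k' t
    have hA := colStoch_aug n τbar P τ hP hτle (k' + t + 1)
    have key := entry_le_mul (AugMat n τbar P τ (k' + t + 1)) (Word n τbar P τ k' t)
      hA.1 hW.1 ((0 : Fin (τbar + 1)), j) ((0 : Fin (τbar + 1)), j) ((0 : Fin (τbar + 1)), j)
    have hAe : AugMat n τbar P τ (k' + t + 1) ((0 : Fin (τbar + 1)), j)
        ((0 : Fin (τbar + 1)), j) = P j j :=
      aug_col0 n τbar P τ (k' + t + 1) 0 j j (by simp [hτself])
    rw [hAe] at key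
    refine le_trans ?_ key
    rw [pow_succ, mul_comm]
    exact mul_le_mul (hpmin.2 ⟨j, j, hdiag j, rfl⟩) ih (pow_nonneg hp0.le t) (hdiag j).le

lemma travel (n τbar : ℕ) (P : Matrix (Fin n) (Fin n) ℝ) (τ : ℕ → Fin n → Fin n → ℕ)
    (hP : ColStoch P) (hdiag : ∀ j, 0 < P j j) (hτle : ∀ k j i, τ k j i ≤ τbar)
    (hτself : ∀ k j, τ k j j = 0)
    (pmin : ℝ) (hpmin : IsLeast {x : ℝ | ∃ j i : Fin n, 0 < P j i ∧ P j i = x} pmin) :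
    ∀ (m : ℕ) (i j : Fin n), 0 < (P ^ m) j i → ∀ (k' t : ℕ), m * (τbar + 1) ≤ t →
      pmin ^ t ≤ Word n τbar P τ k' t ((0 : Fin (τbar + 1)), j) ((0 : Fin (τbar + 1)), i) := by
  have hp0 : 0 < pmin := by obtain ⟨a, b, h1, h2⟩ := hpmin.1; exact h2 ▸ h1
  have hp1 : pmin ≤ 1 := by
    obtain ⟨a, b, h1, h2⟩ := hpmin.1
    calc pmin = P a b := h2.symm
      _ ≤ ∑ y, P y b := Finset.single_le_sum (fun y _ => hP.1 y b) (Finset.mem_univ a)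
      _ = 1 := hP.2 b
  intro m
  induction m with
  | zero =>
    intro i j hij k' t _
    have hji : j = i := by
      by_contra hne
      rw [pow_zero, Matrix.one_apply_ne hne] at hij
      exact lt_irrefl 0 hij
    subst hji
    exact selfloop n τbar P τ hP hdiag hτle hτself pmin hpmin k' t j
  | succ m ih =>
    intro i j hij k' t ht
    rw [pow_succ, Matrix.mul_apply] at hij
    obtain ⟨x, -, hx⟩ :=
      Finset.exists_lt_of_sum_lt (f := fun _ : Fin n => (0 : ℝ)) (by simpa using hij)
    have hnn := (colStoch_pow P hP m).1
    rcases mul_pos_iff.mp hx with ⟨h1, h2⟩ | ⟨h1, h2⟩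
    swap
    · exact absurd h1 (not_lt.mpr (hnn _ _))
    set r := τ (k' + 1) x i with hr
    have hrle : r ≤ τbar := hτle _ _ _
    have hsm : (m + 1) * (τbar + 1) = m * (τbar + 1) + (τbar + 1) := Nat.succ_mul _ _
    have h1r : r + 1 ≤ t := by omega
    have hsplit : Word n τbar P τ k' t
        = Word n τbar P τ (k' + (r + 1)) (t - (r + 1)) * Word n τbar P τ k' (r + 1) :=
      word_split n τbar P τ k' (r + 1) t h1r
    have hinner : Word n τbar P τ k' (r + 1)
        = Word n τbar P τ (k' + 1) r * Word n τbar P τ k' 1 := by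
      rw [← word_add]
    have hW1 : Word n τbar P τ k' 1 ((⟨r, by omega⟩ : Fin (τbar + 1)), x)
        ((0 : Fin (τbar + 1)), i) = P x i := by
      show (AugMat n τbar P τ (k' + 0 + 1) * Word n τbar P τ k' 0) _ _ = _
      rw [show Word n τbar P τ k' 0 = 1 from rfl, mul_one]
      exact aug_col0 n τbar P τ (k' + 0 + 1) ⟨r, by omega⟩ x i hr.symm
    have hdes : (1 : ℝ) ≤ Word n τbar P τ (k' + 1) r ((0 : Fin (τbar + 1)), x)
        ((⟨r, by omega⟩ : Fin (τbar + 1)), x) :=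
      descent0 n τbar P τ hP hτle (k' + 1) ⟨r, by omega⟩ x
    have hWA := colStoch_word n τbar P τ hP hτle (k' + 1) r
    have hWB := colStoch_word n τbar P τ hP hτle k' 1
    have hmid : pmin ≤ Word n τbar P τ k' (r + 1) ((0 : Fin (τbar + 1)), x)
        ((0 : Fin (τbar + 1)), i) := by
      have key := entry_le_mul (Word n τbar P τ (k' + 1) r) (Word n τbar P τ k' 1)
        hWA.1 hWB.1 ((0 : Fin (τbar + 1)), x) ((⟨r, by omega⟩ : Fin (τbar + 1)), x)
        ((0 : Fin (τbar + 1)), i)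
      rw [hW1] at key
      rw [hinner]
      refine le_trans ?_ key
      calc pmin = 1 * pmin := (one_mul pmin).symm
        _ ≤ _ * P x i :=
          mul_le_mul hdes (hpmin.2 ⟨x, i, h2, rfl⟩) hp0.le (le_trans zero_le_one hdes)
    have hIH : pmin ^ (t - (r + 1)) ≤ Word n τbar P τ (k' + (r + 1)) (t - (r + 1))
        ((0 : Fin (τbar + 1)), j) ((0 : Fin (τbar + 1)), x) :=
      ih x j h1 (k' + (r + 1)) (t - (r + 1)) (by omega)
    have hWC := colStoch_word n τbar P τ hP hτle (k' + (r + 1)) (t - (r + 1))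
    have hWD := colStoch_word n τbar P τ hP hτle k' (r + 1)
    have key2 := entry_le_mul (Word n τbar P τ (k' + (r + 1)) (t - (r + 1)))
      (Word n τbar P τ k' (r + 1)) hWC.1 hWD.1
      ((0 : Fin (τbar + 1)), j) ((0 : Fin (τbar + 1)), x) ((0 : Fin (τbar + 1)), i)
    rw [hsplit]
    refine le_trans ?_ key2
    calc pmin ^ t ≤ pmin ^ (t - (r + 1) + 1) :=
          pow_le_pow_of_le_one hp0.le hp1 (by omega)
      _ = pmin ^ (t - (r + 1)) * pmin := pow_succ pmin _
      _ ≤ _ := mul_le_mul hIH hmid hp0.le (hWC.1 _ _)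

lemma core (n : ℕ) (hn : 2 ≤ n) (τbar : ℕ) (P : Matrix (Fin n) (Fin n) ℝ)
    (τ : ℕ → Fin n → Fin n → ℕ) (hP : ColStoch P) (hdiag : ∀ j, 0 < P j j)
    (hirr : ∀ j i : Fin n, ∃ m : ℕ, 1 ≤ m ∧ 0 < (P ^ m) j i)
    (hτle : ∀ k j i, τ k j i ≤ τbar) (hτself : ∀ k j, τ k j j = 0)
    (pmin : ℝ) (hpmin : IsLeast {x : ℝ | ∃ j i : Fin n, 0 < P j i ∧ P j i = x} pmin)
    (k' : ℕ) (j : Fin n) (q : Fin (τbar + 1) × Fin n) :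
    pmin ^ (n * (τbar + 1)) ≤ Word n τbar P τ k' (n * (τbar + 1)) ((0 : Fin (τbar + 1)), j) q := by
  have hp0 : 0 < pmin := by obtain ⟨a, b, h1, h2⟩ := hpmin.1; exact h2 ▸ h1
  have hp1 : pmin ≤ 1 := by
    obtain ⟨a, b, h1, h2⟩ := hpmin.1
    calc pmin = P a b := h2.symm
      _ ≤ ∑ y, P y b := Finset.single_le_sum (fun y _ => hP.1 y b) (Finset.mem_univ a)
      _ = 1 := hP.2 b
  obtain ⟨s, i⟩ := q
  have hs := s.isLt
  have hL1 : (n - 1) * (τbar + 1) + (τbar + 1) = n * (τbar + 1) := by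
    obtain ⟨n', rfl⟩ : ∃ n', n = n' + 1 := ⟨n - 1, by omega⟩
    simp [Nat.succ_sub_one, Nat.succ_mul]
  have hsplit : Word n τbar P τ k' (n * (τbar + 1))
      = Word n τbar P τ (k' + s.val) (n * (τbar + 1) - s.val) * Word n τbar P τ k' s.val :=
    word_split n τbar P τ k' s.val (n * (τbar + 1)) (by omega)
  have hreach := reach n hn P hP hdiag hirr j i
  have htr := travel n τbar P τ hP hdiag hτle hτself pmin hpmin (n - 1) i j hreach
    (k' + s.val) (n * (τbar + 1) - s.val) (by omega)
  have hdes := descent0 n τbar P τ hP hτle k' s i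
  have hWC := colStoch_word n τbar P τ hP hτle (k' + s.val) (n * (τbar + 1) - s.val)
  have hWD := colStoch_word n τbar P τ hP hτle k' s.val
  have key := entry_le_mul (Word n τbar P τ (k' + s.val) (n * (τbar + 1) - s.val))
    (Word n τbar P τ k' s.val) hWC.1 hWD.1
    ((0 : Fin (τbar + 1)), j) ((0 : Fin (τbar + 1)), i) (s, i)
  rw [hsplit]
  refine le_trans ?_ key
  calc pmin ^ (n * (τbar + 1)) ≤ pmin ^ (n * (τbar + 1) - s.val) :=
        pow_le_pow_of_le_one hp0.le hp1 (by omega)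
    _ = pmin ^ (n * (τbar + 1) - s.val) * 1 := (mul_one _).symm
    _ ≤ _ := mul_le_mul htr hdes zero_le_one (hWC.1 _ _)


theorem statement2 (n : ℕ) (hn : 2 ≤ n)
    (P : Matrix (Fin n) (Fin n) ℝ) (hP : ColStoch P)
    (hdiag : ∀ j, 0 < P j j)
    (hirr : ∀ j i : Fin n, ∃ m : ℕ, 1 ≤ m ∧ 0 < (P ^ m) j i)
    (τbar : ℕ) (τ : ℕ → Fin n → Fin n → ℕ)
    (hτle : ∀ k j i, τ k j i ≤ τbar)
    (hτself : ∀ k j, τ k j j = 0)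
    (pmin : ℝ)
    (hpmin : IsLeast {x : ℝ | ∃ j i : Fin n, 0 < P j i ∧ P j i = x} pmin)
    (k ℓ : ℕ) (hℓ : n * (τbar + 1) ≤ ℓ) :
    ∀ (j : Fin n) (q : Fin (τbar + 1) × Fin n),
      0 < Word n τbar P τ k ℓ (0, j) q ∧
        pmin ^ (n * (τbar + 1)) ≤ Word n τbar P τ k ℓ (0, j) q := by
  have hp0 : 0 < pmin := by obtain ⟨a, b, h1, h2⟩ := hpmin.1; exact h2 ▸ h1
  intro j q
  have hsplit := word_split n τbar P τ k (ℓ - n * (τbar + 1)) ℓ (by omega)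
  rw [show ℓ - (ℓ - n * (τbar + 1)) = n * (τbar + 1) by omega] at hsplit
  have hD := colStoch_word n τbar P τ hP hτle k (ℓ - n * (τbar + 1))
  have key : pmin ^ (n * (τbar + 1)) ≤ Word n τbar P τ k ℓ (0, j) q := by
    rw [hsplit, Matrix.mul_apply]
    have h1 : pmin ^ (n * (τbar + 1))
        = ∑ x, pmin ^ (n * (τbar + 1)) * Word n τbar P τ k (ℓ - n * (τbar + 1)) x q := by
      rw [← Finset.mul_sum, hD.2 q, mul_one]
    rw [h1]
    apply Finset.sum_le_sum
    intro x _
    exact mul_le_mul_of_nonneg_right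
      (core n hn τbar P τ hP hdiag hirr hτle hτself pmin hpmin _ j x) (hD.1 _ _)
  exact ⟨lt_of_lt_of_le (pow_pos hp0 _) key, key⟩
end

section
/- Let S = {P̄₁, …, P̄_m} be a finite nonempty collection of N×N column stochastic matrices such that every finite product (word) of matrices from S, with repetitions allowed, is SIA. Then for every ε > 0 there exists an integer ν(ε) such that every word B formed as a product of at least ν(ε) matrices from S satisfies δ(B) < ε, where δ(B) = max_j max_{i₁, i₂} |B(j, i₁) − B(j, i₂)|. -/
/-!
Every nonempty word has a power with a strictly positive row, because the limit `c 𝟙ᵀ` of its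
powers has one (the entries of `c` sum to `1`). By pigeonhole on positivity patterns, a word of
length at least the number of patterns factors as `L₁ Q P` where `Q P` and `P` have the same
pattern; then so do `Qᵐ P` and `P` for every `m`, hence `P`, and with it the whole word, has a
positive row. There are finitely many words of that length `k₀`, so their positive rows are all
bounded below by one `γ > 0`. A column stochastic matrix with a row `≥ γ` contracts zero-sum vectors
in `ℓ¹` by the factor `1 - γ`, so two columns of a word of length `k₀ k` are at `ℓ¹` distance at
most `2 (1 - γ)ᵏ`.
-/

open Matrix Filter

open Topology

variable {n : Type*}

def posPattern (A : Matrix n n ℝ) : n → n → Prop := fun j i => 0 < A j i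

def HasPosRow (A : Matrix n n ℝ) : Prop := ∃ j, ∀ i, 0 < A j i

lemma HasPosRow.of_posPattern_eq {A B : Matrix n n ℝ} (h : posPattern A = posPattern B)
    (hA : HasPosRow A) : HasPosRow B := by
  obtain ⟨j, hj⟩ := hA
  exact ⟨j, fun i => Eq.mp (congrFun₂ h j i) (hj i)⟩

variable [Fintype n]

lemma colStoch_iff_mem_colStochastic [DecidableEq n] {A : Matrix n n ℝ} :
    ColStoch A ↔ A ∈ colStochastic ℝ n :=
  mem_colStochastic_iff_sum.symm

lemma exists_pos_of_mem_colStochastic [DecidableEq n] {A : Matrix n n ℝ}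
    (hA : A ∈ colStochastic ℝ n) (i : n) : ∃ j, 0 < A j i := by
  obtain ⟨j, -, hj⟩ := Finset.exists_lt_of_sum_lt (s := Finset.univ) (f := 0)
    (g := fun j => A j i) (by simp [sum_col_of_mem_colStochastic hA])
  exact ⟨j, hj⟩

lemma list_prod_mem_colStochastic [DecidableEq n] {S : Set (Matrix n n ℝ)}
    (hS : ∀ A ∈ S, A ∈ colStochastic ℝ n) {L : List (Matrix n n ℝ)} (hL : ∀ A ∈ L, A ∈ S) :
    L.prod ∈ colStochastic ℝ n :=
  Submonoid.list_prod_mem _ fun A hA => hS A (hL A hA)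

lemma mul_apply_pos_iff {A B : Matrix n n ℝ} (hA : ∀ j i, 0 ≤ A j i) (hB : ∀ j i, 0 ≤ B j i)
    (j i : n) : 0 < (A * B) j i ↔ ∃ k, 0 < A j k ∧ 0 < B k i := by
  rw [mul_apply, Finset.sum_pos_iff_of_nonneg fun k _ => mul_nonneg (hA j k) (hB k i)]
  have hA' : ∀ k, ¬A j k < 0 := fun k => (hA j k).not_gt
  simp only [Finset.mem_univ, true_and, mul_pos_iff, hA', false_and, or_false]

lemma posPattern_mul_congr {A X Y : Matrix n n ℝ} (hA : ∀ j i, 0 ≤ A j i)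
    (hX : ∀ j i, 0 ≤ X j i) (hY : ∀ j i, 0 ≤ Y j i) (h : posPattern X = posPattern Y) :
    posPattern (A * X) = posPattern (A * Y) := by
  have h' : ∀ k i, (0 < X k i) = (0 < Y k i) := fun k i => congrFun₂ h k i
  funext j i
  simp only [posPattern, mul_apply_pos_iff hA hX, mul_apply_pos_iff hA hY, h']

namespace HasPosRow

variable {A B : Matrix n n ℝ}

lemma mul_left [DecidableEq n] (hA : A ∈ colStochastic ℝ n) (hB : ∀ j i, 0 ≤ B j i)
    (h : HasPosRow B) : HasPosRow (A * B) := by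
  obtain ⟨k, hk⟩ := h
  obtain ⟨j, hj⟩ := exists_pos_of_mem_colStochastic hA k
  exact ⟨j, fun i => (mul_apply_pos_iff hA.1 hB j i).2 ⟨k, hj, hk i⟩⟩

lemma mul_right [DecidableEq n] (hA : ∀ j i, 0 ≤ A j i) (hB : B ∈ colStochastic ℝ n)
    (h : HasPosRow A) : HasPosRow (A * B) := by
  obtain ⟨j, hj⟩ := h
  refine ⟨j, fun i => ?_⟩
  obtain ⟨k, hk⟩ := exists_pos_of_mem_colStochastic hB i
  exact (mul_apply_pos_iff hA hB.1 j i).2 ⟨k, hj k, hk⟩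

lemma eventually_row_ge (h : HasPosRow A) : ∀ᶠ γ in 𝓝 (0 : ℝ), ∃ j, ∀ i, γ ≤ A j i := by
  obtain ⟨j, hj⟩ := h
  filter_upwards [eventually_all.2 fun i => eventually_le_nhds (hj i)] with γ hγ using ⟨j, hγ⟩

end HasPosRow

lemma isOpen_setOf_hasPosRow : IsOpen {A : Matrix n n ℝ | HasPosRow A} := by
  simp only [HasPosRow, Set.ofPred_exists, Set.ofPred_forall]
  exact isOpen_iUnion fun j => isOpen_iInter_of_finite fun i =>
    isOpen_lt continuous_const ((continuous_apply i).comp (continuous_apply j))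

lemma IsSIA.exists_hasPosRow_pow [DecidableEq n] [Nonempty n] {B : Matrix n n ℝ}
    (hB : IsSIA B) : ∃ m, HasPosRow (B ^ m) := by
  obtain ⟨hBcs, c, -, hlim⟩ := hB
  rw [colStoch_iff_mem_colStochastic] at hBcs
  obtain ⟨i₀⟩ := ‹Nonempty n›
  have hsum : ∑ j, c j = 1 := by
    have hcont : Continuous fun M : Matrix n n ℝ => ∑ j, M j i₀ := by fun_prop
    have hconst : Tendsto (fun m => ∑ j, (B ^ m) j i₀) atTop (𝓝 1) :=
      tendsto_const_nhds.congr fun m => (sum_col_of_mem_colStochastic (pow_mem hBcs m) i₀).symm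
    simpa using tendsto_nhds_unique ((hcont.tendsto _).comp hlim) hconst
  obtain ⟨j₀, -, hj₀⟩ := Finset.exists_lt_of_sum_lt (s := Finset.univ) (f := 0) (g := c)
    (by simp [hsum])
  have hlimPos : HasPosRow (of fun j (_ : n) => c j) := ⟨j₀, fun _ => hj₀⟩
  exact (hlim.eventually (isOpen_setOf_hasPosRow.mem_nhds hlimPos)).exists

lemma hasPosRow_of_posPattern_mul_eq [DecidableEq n] {Q P : Matrix n n ℝ}
    (hQ : Q ∈ colStochastic ℝ n) (hP : P ∈ colStochastic ℝ n)
    (h : posPattern (Q * P) = posPattern P) {m : ℕ} (hm : HasPosRow (Q ^ m)) : HasPosRow P := by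
  have hiter : ∀ k, posPattern (Q ^ k * P) = posPattern P := by
    intro k
    induction k with
    | zero => rw [pow_zero, one_mul]
    | succ k ih =>
      rw [pow_succ', mul_assoc,
        posPattern_mul_congr hQ.1 (mul_mem (pow_mem hQ k) hP).1 hP.1 ih, h]
  exact (hm.mul_right (pow_mem hQ m).1 hP).of_posPattern_eq (hiter m)

lemma List.exists_eq_append_append_of_card_le_length {α β : Type*} [Fintype β]
    (f : List α → β) (L : List α) (h : Fintype.card β ≤ L.length) :
    ∃ L₁ Q P, Q ≠ [] ∧ L = L₁ ++ Q ++ P ∧ f (Q ++ P) = f P := by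
  obtain ⟨a, b, hne, hab⟩ := Fintype.exists_ne_map_eq_of_card_lt
    (fun t : Fin (L.length + 1) => f (L.drop t)) (by simpa [Nat.lt_succ_iff])
  wlog hlt : a < b generalizing a b
  · exact this b a hne.symm hab.symm (lt_of_le_of_ne (not_lt.1 hlt) hne.symm)
  have hsplit : (L.drop a).take (b - a) ++ L.drop b = L.drop a := by
    conv_rhs => rw [← List.take_append_drop (b - a) (L.drop a)]
    rw [List.drop_drop, Nat.add_sub_cancel' hlt.le]
  refine ⟨L.take a, (L.drop a).take (b - a), L.drop b, ?_, ?_, ?_⟩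
  · rw [← List.length_pos_iff, List.length_take, List.length_drop]
    omega
  · rw [List.append_assoc, hsplit, List.take_append_drop]
  · rw [hsplit]
    exact hab

lemma hasPosRow_prod_of_card_le_length [DecidableEq n] {S : Set (Matrix n n ℝ)}
    (hS : ∀ A ∈ S, A ∈ colStochastic ℝ n)
    (hpow : ∀ L : List (Matrix n n ℝ), (∀ A ∈ L, A ∈ S) → L ≠ [] → ∃ m, HasPosRow (L.prod ^ m))
    {L : List (Matrix n n ℝ)} (hL : ∀ A ∈ L, A ∈ S)
    (hlen : Fintype.card (n → n → Prop) ≤ L.length) : HasPosRow L.prod := by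
  obtain ⟨L₁, Q, P, hQ, rfl, hQP⟩ :=
    List.exists_eq_append_append_of_card_le_length (fun K => posPattern K.prod) L hlen
  simp only [List.mem_append, or_imp, forall_and] at hL
  obtain ⟨⟨hL₁, hQS⟩, hPS⟩ := hL
  obtain ⟨m, hm⟩ := hpow Q hQS hQ
  rw [List.prod_append] at hQP
  have hP := hasPosRow_of_posPattern_mul_eq (list_prod_mem_colStochastic hS hQS)
    (list_prod_mem_colStochastic hS hPS) hQP hm
  have hL₁Q : ∀ A ∈ L₁ ++ Q, A ∈ S := by simpa [or_imp, forall_and] using ⟨hL₁, hQS⟩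
  rw [List.prod_append]
  exact hP.mul_left (list_prod_mem_colStochastic hS hL₁Q) (list_prod_mem_colStochastic hS hPS).1

lemma Set.Finite.setOf_length_eq_forall_mem {α : Type*} {S : Set α} (hS : S.Finite) (k : ℕ) :
    {L : List α | L.length = k ∧ ∀ A ∈ L, A ∈ S}.Finite := by
  have : Finite S := hS
  refine ((List.finite_length_eq S k).image (List.map Subtype.val)).subset ?_
  rintro L ⟨hlen, hL⟩
  lift L to List S using hL
  exact ⟨L, by simpa using hlen, rfl⟩

lemma exists_pos_row_ge_of_finite [DecidableEq n] {S : Set (Matrix n n ℝ)} (hS : S.Finite)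
    (k : ℕ)
    (h : ∀ L : List (Matrix n n ℝ), (∀ A ∈ L, A ∈ S) → L.length = k → HasPosRow L.prod) :
    ∃ γ > 0, ∀ L : List (Matrix n n ℝ), (∀ A ∈ L, A ∈ S) → L.length = k →
      ∃ j, ∀ i, γ ≤ L.prod j i := by
  have hev : ∀ᶠ γ in 𝓝[>] (0 : ℝ), 0 < γ ∧
      ∀ L ∈ {L : List (Matrix n n ℝ) | L.length = k ∧ ∀ A ∈ L, A ∈ S}, ∃ j, ∀ i, γ ≤ L.prod j i :=
    eventually_mem_nhdsWithin.and <| nhdsWithin_le_nhds <|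
      (hS.setOf_length_eq_forall_mem k).eventually_all.2 fun L hL =>
        (h L hL.2 hL.1).eventually_row_ge
  obtain ⟨γ, hγ, hγL⟩ := hev.exists
  exact ⟨γ, hγ, fun L hL hlen => hγL L ⟨hlen, hL⟩⟩

def colDist (A : Matrix n n ℝ) (i₁ i₂ : n) : ℝ := ∑ j, |A j i₁ - A j i₂|

lemma abs_sub_le_colDist (A : Matrix n n ℝ) (j i₁ i₂ : n) :
    |A j i₁ - A j i₂| ≤ colDist A i₁ i₂ :=
  Finset.single_le_sum (f := fun j => |A j i₁ - A j i₂|) (fun _ _ => abs_nonneg _)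
    (Finset.mem_univ j)

lemma colDist_le_two [DecidableEq n] {A : Matrix n n ℝ} (hA : A ∈ colStochastic ℝ n)
    (i₁ i₂ : n) : colDist A i₁ i₂ ≤ 2 :=
  calc colDist A i₁ i₂ ≤ ∑ j, (A j i₁ + A j i₂) := Finset.sum_le_sum fun j _ =>
        (abs_sub _ _).trans_eq (by rw [abs_of_nonneg (hA.1 _ _), abs_of_nonneg (hA.1 _ _)])
    _ = 2 := by
      rw [Finset.sum_add_distrib, sum_col_of_mem_colStochastic hA,
        sum_col_of_mem_colStochastic hA]
      norm_num

lemma sum_abs_mulVec_le_of_nonneg {A : Matrix n n ℝ} (hA : ∀ j i, 0 ≤ A j i) {r : ℝ}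
    (hcol : ∀ i, ∑ j, A j i = r) (v : n → ℝ) : ∑ j, |(A *ᵥ v) j| ≤ r * ∑ i, |v i| :=
  calc ∑ j, |(A *ᵥ v) j| ≤ ∑ j, ∑ i, A j i * |v i| := Finset.sum_le_sum fun j _ =>
        (Finset.abs_sum_le_sum_abs _ _).trans_eq (by simp [abs_mul, abs_of_nonneg (hA j _)])
    _ = r * ∑ i, |v i| := by
      rw [Finset.sum_comm]
      simp [← Finset.sum_mul, hcol, Finset.mul_sum]

/-- Since `∑ v = 0`, lowering the row `j₀` by `γ` does not change `A *ᵥ v`; it leaves a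
nonnegative matrix with column sums `1 - γ`. -/
lemma sum_abs_mulVec_le_of_row_ge [DecidableEq n] {A : Matrix n n ℝ}
    (hA : A ∈ colStochastic ℝ n) {γ : ℝ} {j₀ : n} (hrow : ∀ i, γ ≤ A j₀ i) {v : n → ℝ}
    (hv : ∑ i, v i = 0) : ∑ j, |(A *ᵥ v) j| ≤ (1 - γ) * ∑ i, |v i| := by
  set A' : Matrix n n ℝ := A - of fun j _ => if j = j₀ then γ else 0
  have hA'v : A' *ᵥ v = A *ᵥ v := by
    rw [sub_mulVec, sub_eq_self]
    ext j
    simp [mulVec, dotProduct, ← Finset.mul_sum, hv]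
  have hnn : ∀ j i, 0 ≤ A' j i := by
    intro j i
    by_cases h : j = j₀
    · subst h
      simpa [A'] using hrow i
    · simpa [A', h] using hA.1 j i
  have hcol : ∀ i, ∑ j, A' j i = 1 - γ := by
    intro i
    simp [A', Finset.sum_sub_distrib, sum_col_of_mem_colStochastic hA]
  rw [← hA'v]
  exact sum_abs_mulVec_le_of_nonneg hnn hcol v

lemma colDist_mul_le [DecidableEq n] {B D : Matrix n n ℝ} (hB : B ∈ colStochastic ℝ n)
    (hD : D ∈ colStochastic ℝ n) {γ : ℝ} {j₀ : n} (hrow : ∀ i, γ ≤ B j₀ i) (i₁ i₂ : n) :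
    colDist (B * D) i₁ i₂ ≤ (1 - γ) * colDist D i₁ i₂ := by
  have hcol : ∀ j, (B * D) j i₁ - (B * D) j i₂ = (B *ᵥ fun k => D k i₁ - D k i₂) j := by
    intro j
    simp [mul_apply, mulVec, dotProduct, mul_sub, Finset.sum_sub_distrib]
  simp only [colDist, hcol]
  exact sum_abs_mulVec_le_of_row_ge hB hrow
    (by simp [Finset.sum_sub_distrib, sum_col_of_mem_colStochastic hD])

lemma colDist_prod_le [DecidableEq n] {S : Set (Matrix n n ℝ)}
    (hS : ∀ A ∈ S, A ∈ colStochastic ℝ n) {k₀ : ℕ} {γ : ℝ}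
    (hblock : ∀ L : List (Matrix n n ℝ), (∀ A ∈ L, A ∈ S) → L.length = k₀ →
      ∃ j, ∀ i, γ ≤ L.prod j i)
    (k : ℕ) {L : List (Matrix n n ℝ)} (hL : ∀ A ∈ L, A ∈ S) (hlen : k₀ * k ≤ L.length)
    (i₁ i₂ : n) : colDist L.prod i₁ i₂ ≤ 2 * (1 - γ) ^ k := by
  induction k generalizing L with
  | zero => simpa using colDist_le_two (list_prod_mem_colStochastic hS hL) i₁ i₂
  | succ k ih =>
    rw [Nat.mul_succ] at hlen
    have hT : ∀ A ∈ L.take k₀, A ∈ S := fun A hA => hL A (List.mem_of_mem_take hA)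
    have hD : ∀ A ∈ L.drop k₀, A ∈ S := fun A hA => hL A (List.mem_of_mem_drop hA)
    obtain ⟨j₀, hj₀⟩ := hblock (L.take k₀) hT (by rw [List.length_take]; omega)
    have hγ : γ ≤ 1 :=
      (hj₀ j₀).trans (le_one_of_mem_colStochastic (list_prod_mem_colStochastic hS hT))
    calc colDist L.prod i₁ i₂ = colDist ((L.take k₀).prod * (L.drop k₀).prod) i₁ i₂ := by
          rw [← List.prod_append, List.take_append_drop]
      _ ≤ (1 - γ) * colDist (L.drop k₀).prod i₁ i₂ :=
          colDist_mul_le (list_prod_mem_colStochastic hS hT)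
            (list_prod_mem_colStochastic hS hD) hj₀ i₁ i₂
      _ ≤ (1 - γ) * (2 * (1 - γ) ^ k) :=
          mul_le_mul_of_nonneg_left (ih hD (by rw [List.length_drop]; omega)) (by linarith)
      _ = 2 * (1 - γ) ^ (k + 1) := by ring

theorem statement4_general (N : ℕ) (S : Finset (Matrix (Fin N) (Fin N) ℝ))
    (hcs : ∀ A ∈ S, ColStoch A)
    (hSIA : ∀ L : List (Matrix (Fin N) (Fin N) ℝ),
      (∀ A ∈ L, A ∈ S) → L ≠ [] → IsSIA L.prod) :
    ∀ ε : ℝ, 0 < ε → ∃ ν : ℕ, ∀ L : List (Matrix (Fin N) (Fin N) ℝ),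
      (∀ A ∈ L, A ∈ S) → ν ≤ L.length →
      ∀ j i₁ i₂ : Fin N, |L.prod j i₁ - L.prod j i₂| < ε := by
  intro ε hε
  cases isEmpty_or_nonempty (Fin N) with
  | inl _ => exact ⟨0, fun _ _ _ j => isEmptyElim j⟩
  | inr _ =>
    have hS : ∀ A ∈ (S : Set (Matrix (Fin N) (Fin N) ℝ)), A ∈ colStochastic ℝ (Fin N) :=
      fun A hA => colStoch_iff_mem_colStochastic.1 (hcs A hA)
    have hpow : ∀ K : List (Matrix (Fin N) (Fin N) ℝ), (∀ A ∈ K, A ∈ S) → K ≠ [] →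
        ∃ m, HasPosRow (K.prod ^ m) :=
      fun K hK hne => (hSIA K hK hne).exists_hasPosRow_pow
    obtain ⟨γ, hγ, hblock⟩ := exists_pos_row_ge_of_finite S.finite_toSet _ fun L hL hlen =>
      hasPosRow_prod_of_card_le_length hS hpow hL hlen.ge
    obtain ⟨k, hk⟩ := exists_pow_lt_of_lt_one (half_pos hε) (sub_lt_self (1 : ℝ) hγ)
    refine ⟨Fintype.card (Fin N → Fin N → Prop) * k, fun L hL hlen j i₁ i₂ => ?_⟩
    calc |L.prod j i₁ - L.prod j i₂| ≤ colDist L.prod i₁ i₂ := abs_sub_le_colDist _ _ _ _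
      _ ≤ 2 * (1 - γ) ^ k := colDist_prod_le hS hblock k hL hlen i₁ i₂
      _ < ε := by linarith

theorem statement4 (N : ℕ) (S : Finset (Matrix (Fin N) (Fin N) ℝ))
    (hne : S.Nonempty)
    (hcs : ∀ A ∈ S, ColStoch A)
    (hSIA : ∀ L : List (Matrix (Fin N) (Fin N) ℝ),
      (∀ A ∈ L, A ∈ S) → L ≠ [] → IsSIA L.prod) :
    ∀ ε : ℝ, 0 < ε → ∃ ν : ℕ, ∀ L : List (Matrix (Fin N) (Fin N) ℝ),
      (∀ A ∈ L, A ∈ S) → ν ≤ L.length →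
      ∀ j i₁ i₂ : Fin N, |L.prod j i₁ - L.prod j i₂| < ε :=
  statement4_general N S hcs hSIA
end

section
/- Let n ≥ 2 and let (E[k])_{k≥0} be a sequence of edge sets on vertex set {1, …, n} (directed edges, no self-loops). For each k define the n×n matrix P[k] by P[k]_{lj} = 1/(1 + D_j⁺[k]) if l = j or (l, j) ∈ E[k], and P[k]_{lj} = 0 otherwise, where D_j⁺[k] is the number of out-neighbors of j in E[k]. Suppose there exist an integer ℓ ≥ 1 and a strictly increasing sequence of times t₀ = 0 < t₁ < t₂ < … with t_{m+1} − t_m ≤ ℓ for all m, such that for every m the union digraph with edge set E[t_m] ∪ … ∪ E[t_{m+1} − 1] is strongly connected. Let τ̄ ∈ ℕ and let τ(k, j, i) ∈ {0, …, τ̄} be delay functions with τ(k, j, j) = 0. Let y and z both evolve by the time-varying delayed iteration x_j[k+1] = Σ_{i=1}^n Σ_{s=0}^{k} [s + τ(s, j, i) = k] · P[s]_{ji} · x_i[s], with y[0] = y₀ ∈ ℝⁿ and z[0] = 𝟙. Then z_j[k] > 0 for all j and k, and for every j, y_j[k] / z_j[k] converges as k → ∞ to (Σ_{l=1}^n y₀(l))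 / n. -/
open Matrix Filter

/-- The out-degree of node `j`: the number of edges `(l, j)` (from `j` to `l`) in `E`. -/
def outDeg {n : ℕ} (E : Finset (Fin n × Fin n)) (j : Fin n) : ℕ :=
  (E.filter fun e => e.2 = j).card

/-- The weight matrix associated with edge set `E`: node `j` puts weight
`1/(1 + D_j⁺)` on its self-link and on each outgoing link `(l, j)`; zero otherwise. -/
noncomputable def degWeights {n : ℕ} (E : Finset (Fin n × Fin n)) : Matrix (Fin n) (Fin n) ℝ :=
  fun l j => if l = j ∨ (l, j) ∈ E then 1 / (1 + (outDeg E j : ℝ)) else 0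

/-- The digraph with edge set `F` (an edge `(l, j)` points from `j` to `l`) is strongly
connected: for every ordered pair of distinct vertices there is a directed path. -/
def StronglyConnected {n : ℕ} (F : Finset (Fin n × Fin n)) : Prop :=
  ∀ i j : Fin n, i ≠ j → Relation.TransGen (fun a b => (b, a) ∈ F) i j

/-- The time-varying delayed iteration driven by matrices `P[s]` and delays `τ`:
`x_j[k+1] = Σ_i Σ_{s=0}^{k} [s + τ(s,j,i) = k] ⬝ P[s]_{ji} ⬝ x_i[s]`. -/
def DelayedIterTV {n : ℕ} (P : ℕ → Matrix (Fin n) (Fin n) ℝ)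
    (τ : ℕ → Fin n → Fin n → ℕ) (x : ℕ → Fin n → ℝ) : Prop :=
  ∀ k j, x (k + 1) j =
    ∑ i, ∑ s ∈ Finset.range (k + 1), if s + τ s j i = k then P s j i * x s i else 0

/-!
Once the state is augmented by the messages in flight, indexed by receiver and remaining delay
`d ≤ τbar`, the delayed iteration becomes a linear iteration `X[k+1] = A[k] X[k]` with `A[k]`
nonnegative and column stochastic, so the total mass of `X` is conserved. The zero-delay
self-loops keep the influence of a node wherever it has arrived, and every strongly connected
window passes it on to one more node within `τbar` further steps. Hence for a uniform `B` every
row `(j, 0)` of a product of `B` consecutive `A[k]` is positive, with entries at least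
`(1/n)^B`, and such a product contracts the `ℓ¹` norm of zero-sum vectors by `1 - (1/n)^B`.
Applied to `y - c z` with `c = ∑ y₀ / n`, which has zero mass, this gives `y - c z → 0`, while
`z_j[k] ≥ (1/n)^B n` for `k ≥ B`.
-/

open Finset

section NonnegMatrix

variable {ι : Type*} [Fintype ι]

theorem sum_mulVec_of_sum_col_eq (M : Matrix ι ι ℝ) {c : ℝ} (hcol : ∀ q, ∑ p, M p q = c)
    (v : ι → ℝ) : ∑ p, (M *ᵥ v) p = c * ∑ q, v q := by
  simp only [mulVec, dotProduct]
  rw [sum_comm, mul_sum]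
  exact sum_congr rfl fun q _ => by rw [← sum_mul, hcol]

theorem sum_abs_mulVec_le (M : Matrix ι ι ℝ) (hM : ∀ p q, 0 ≤ M p q) {c : ℝ}
    (hcol : ∀ q, ∑ p, M p q = c) (v : ι → ℝ) : ∑ p, |(M *ᵥ v) p| ≤ c * ∑ q, |v q| := by
  calc ∑ p, |(M *ᵥ v) p| ≤ ∑ p, (M *ᵥ fun q => |v q|) p := by
        refine sum_le_sum fun p _ => (abs_sum_le_sum_abs _ _).trans_eq (sum_congr rfl fun q _ => ?_)
        rw [abs_mul, abs_of_nonneg (hM p q)]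
    _ = c * ∑ q, |v q| := sum_mulVec_of_sum_col_eq M hcol _

theorem sum_abs_mulVec_le_of_le_row (M : Matrix ι ι ℝ) (hM : ∀ p q, 0 ≤ M p q)
    (hcol : ∀ q, ∑ p, M p q = 1) {r : ι} {δ : ℝ} (hrow : ∀ q, δ ≤ M r q) {v : ι → ℝ}
    (hv : ∑ q, v q = 0) : ∑ p, |(M *ᵥ v) p| ≤ (1 - δ) * ∑ q, |v q| := by
  classical
  -- Lowering row `r` by `δ` keeps `M` nonnegative, does not change `M *ᵥ v` since `v` has
  -- zero sum, and brings every column sum down to `1 - δ`.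
  set M' : Matrix ι ι ℝ := M - of fun p _ => if p = r then δ else 0
  have hM'v : M' *ᵥ v = M *ᵥ v := by
    rw [sub_mulVec, sub_eq_self]
    ext p
    simp [mulVec, dotProduct, ← mul_sum, hv]
  rw [← hM'v]
  refine sum_abs_mulVec_le M' (fun p q => ?_) (fun q => ?_) v
  · simp only [M', Matrix.sub_apply, of_apply]
    split_ifs with h
    · subst h; linarith [hrow q]
    · linarith [hM p q]
  · simp [M', sum_sub_distrib, hcol]

theorem mul_sum_le_mulVec_apply (M : Matrix ι ι ℝ) {r : ι} {δ : ℝ} (hrow : ∀ q, δ ≤ M r q)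
    {v : ι → ℝ} (hv : ∀ q, 0 ≤ v q) : δ * ∑ q, v q ≤ (M *ᵥ v) r := by
  rw [mul_sum]
  exact sum_le_sum fun q _ => mul_le_mul_of_nonneg_right (hrow q) (hv q)

theorem mul_apply_pos {M N : Matrix ι ι ℝ} (hM : ∀ p q, 0 ≤ M p q) (hN : ∀ p q, 0 ≤ N p q)
    {p b q : ι} (hpb : 0 < M p b) (hbq : 0 < N b q) : 0 < (M * N) p q :=
  sum_pos' (fun c _ => mul_nonneg (hM p c) (hN c q)) ⟨b, mem_univ b, mul_pos hpb hbq⟩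

theorem mul_le_mul_apply_of_pos {M N : Matrix ι ι ℝ} (hM : ∀ p q, 0 ≤ M p q)
    (hN : ∀ p q, 0 ≤ N p q) {a b : ℝ} (hb : 0 ≤ b) (hMa : ∀ p q, 0 < M p q → a ≤ M p q)
    (hNb : ∀ p q, 0 < N p q → b ≤ N p q) {p q : ι} (h : 0 < (M * N) p q) :
    a * b ≤ (M * N) p q := by
  obtain ⟨c, -, hc⟩ := exists_lt_of_sum_lt (f := fun _ => (0 : ℝ)) (by simpa [mul_apply] using h)
  have hpc : 0 < M p c := lt_of_le_of_ne (hM p c) fun h0 => by simp [← h0] at hc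
  have hcq : 0 < N c q := lt_of_le_of_ne (hN c q) fun h0 => by simp [← h0] at hc
  calc a * b ≤ M p c * N c q := mul_le_mul (hMa p c hpc) (hNb c q hcq) hb hpc.le
    _ ≤ (M * N) p q :=
      single_le_sum (f := fun c => M p c * N c q) (fun c _ => mul_nonneg (hM p c) (hN c q))
        (mem_univ c)

end NonnegMatrix

theorem Finset.eq_univ_of_ssubset_succ {α : Type*} [Fintype α] {S : ℕ → Finset α}
    (hmono : Monotone S) (hgrow : ∀ a, S a ≠ univ → S a ⊂ S (a + 1)) (h0 : (S 0).Nonempty) :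
    S (Fintype.card α - 1) = univ := by
  have hcard : ∀ a, S a = univ ∨ a + 1 ≤ #(S a) := by
    intro a
    induction a with
    | zero => exact Or.inr h0.card_pos
    | succ a ih =>
      by_cases hu : S a = univ
      · exact Or.inl (univ_subset_iff.mp (hu ▸ hmono a.le_succ))
      · rcases ih with hu' | ih
        · exact absurd hu' hu
        · have := card_lt_card (hgrow a hu)
          exact Or.inr (by omega)
  have := h0.card_pos.trans_le (card_le_univ (S 0))
  rcases hcard (Fintype.card α - 1) with hu | hle
  · exact hu
  · exact eq_univ_of_card _ (le_antisymm (card_le_univ _) (by omega))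

theorem StronglyConnected.exists_edge_out {n : ℕ} {F : Finset (Fin n × Fin n)}
    (hF : StronglyConnected F) {S : Finset (Fin n)} {a b : Fin n} (ha : a ∈ S) (hb : b ∉ S) :
    ∃ j ∈ S, ∃ l ∉ S, (l, j) ∈ F := by
  by_contra! h
  have hclosed : ∀ c, Relation.TransGen (fun a b => (b, a) ∈ F) a c → c ∈ S := by
    intro c hc
    induction hc with
    | single hac => by_contra hc; exact h a ha _ hc hac
    | tail _ hbc ih => by_contra hc; exact h _ ih _ hc hbc
  exact hb (hclosed b (hF a b (ne_of_mem_of_not_mem ha hb)))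

theorem exists_window_start {t : ℕ → ℕ} {ℓ : ℕ} (ht0 : t 0 = 0) (htmono : StrictMono t)
    (htℓ : ∀ m, t (m + 1) - t m ≤ ℓ) (k : ℕ) : ∃ m, k ≤ t m ∧ t m ≤ k + ℓ := by
  classical
  have hex : ∃ m, k ≤ t m := ⟨k, htmono.id_le k⟩
  refine ⟨Nat.find hex, Nat.find_spec hex, ?_⟩
  rcases h : Nat.find hex with _ | m
  · omega
  · have := Nat.find_min hex (show m < Nat.find hex by omega)
    have := htℓ m
    omega

theorem le_add_mul_of_sub_le {t : ℕ → ℕ} {ℓ : ℕ} (htℓ : ∀ m, t (m + 1) - t m ≤ ℓ) (m c : ℕ) :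
    t (m + c) ≤ t m + c * ℓ := by
  induction c with
  | zero => simp
  | succ c ih =>
    have : t (m + c + 1) ≤ t (m + c) + ℓ := by have := htℓ (m + c); omega
    rw [← add_assoc, add_one_mul]
    linarith

theorem tendsto_zero_of_antitone_of_le_mul {N : ℕ → ℝ} (hN0 : ∀ k, 0 ≤ N k) (hN : Antitone N)
    {B : ℕ} {ρ : ℝ} (hρ : ρ < 1) (hcontr : ∀ k, N (k + B) ≤ ρ * N k) :
    Tendsto N atTop (nhds 0) := by
  have hlim := tendsto_atTop_ciInf hN ⟨0, Set.forall_mem_range.mpr hN0⟩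
  have hL0 : 0 ≤ ⨅ k, N k := le_ciInf hN0
  have hLρ : ⨅ k, N k ≤ ρ * ⨅ k, N k :=
    le_of_tendsto_of_tendsto' (hlim.comp (tendsto_add_atTop_nat B)) (hlim.const_mul ρ) hcontr
  convert hlim
  nlinarith

section DegWeights

variable {n : ℕ} {E : Finset (Fin n × Fin n)}

theorem card_filter_eq_outDeg_add_one (hE : ∀ e ∈ E, e.1 ≠ e.2) (j : Fin n) :
    #{l | l = j ∨ (l, j) ∈ E} = outDeg E j + 1 := by
  have hout : outDeg E j = #{l | (l, j) ∈ E} :=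
    card_nbij' Prod.fst (fun l => (l, j)) (by intro e; aesop) (by intro l; simp)
      (by intro e; aesop) (by intro l; simp)
  rw [filter_or, filter_eq', if_pos (mem_univ j), hout, ← insert_eq, card_insert_of_notMem]
  simpa using fun h => hE _ h rfl

theorem degWeights_nonneg (E : Finset (Fin n × Fin n)) (l j : Fin n) : 0 ≤ degWeights E l j := by
  unfold degWeights
  split_ifs <;> positivity

theorem degWeights_pos_of_mem {l j : Fin n} (h : (l, j) ∈ E) : 0 < degWeights E l j := by
  rw [degWeights, if_pos (Or.inr h)]
  positivity

theorem degWeights_self_pos (E : Finset (Fin n × Fin n)) (j : Fin n) : 0 < degWeights E j j := by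
  rw [degWeights, if_pos (Or.inl rfl)]
  positivity

theorem sum_degWeights_col (hE : ∀ e ∈ E, e.1 ≠ e.2) (j : Fin n) :
    ∑ l, degWeights E l j = 1 := by
  simp only [degWeights, sum_ite, sum_const_zero, add_zero, sum_const,
    card_filter_eq_outDeg_add_one hE, nsmul_eq_mul]
  field_simp
  push_cast
  ring

theorem one_div_le_degWeights_of_pos (hE : ∀ e ∈ E, e.1 ≠ e.2) {l j : Fin n}
    (h : 0 < degWeights E l j) : 1 / (n : ℝ) ≤ degWeights E l j := by
  have hcard : outDeg E j + 1 ≤ n :=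
    card_filter_eq_outDeg_add_one hE j ▸ card_le_univ _ |>.trans_eq (Fintype.card_fin n)
  unfold degWeights at h ⊢
  split_ifs at h ⊢
  · gcongr
    exact_mod_cast (add_comm 1 _).trans_le hcard
  · exact absurd h (lt_irrefl 0)

end DegWeights

theorem sum_fin_ite_val_eq (N v : ℕ) (c : ℝ) :
    ∑ e : Fin N, (if e.val = v then c else 0) = if v < N then c else 0 := by
  rw [Fin.sum_univ_eq_sum_range (fun w => if w = v then c else 0), sum_ite_eq']
  exact if_congr mem_range rfl rfl

namespace DelayedConsensus

variable {n : ℕ} (τbar : ℕ) (P : ℕ → Matrix (Fin n) (Fin n) ℝ) (τ : ℕ → Fin n → Fin n → ℕ)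

/-- Coordinate `(j, d)` of the augmented state is the mass that enters `x_j` after `d` more
steps; depth `0` is `x_j` itself. -/
abbrev Aug (n τbar : ℕ) := Fin n × Fin (τbar + 1)

def sendMat (k : ℕ) : Matrix (Aug n τbar) (Aug n τbar) ℝ :=
  of fun p q => if q.2.val = 0 ∧ τ k p.1 q.1 = p.2.val then P k p.1 q.1 else 0

def shiftMat : Matrix (Aug n τbar) (Aug n τbar) ℝ :=
  of fun p q => if q.1 = p.1 ∧ q.2.val = p.2.val + 1 then 1 else 0

def augStep (k : ℕ) : Matrix (Aug n τbar) (Aug n τbar) ℝ :=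
  sendMat τbar P τ k + shiftMat τbar

def augTrans (k : ℕ) : ℕ → Matrix (Aug n τbar) (Aug n τbar) ℝ
  | 0 => 1
  | m + 1 => augStep τbar P τ (k + m) * augTrans k m

/-- The weighted values sent to `j` before time `k` that enter `x_j[k + v]`. -/
def inFlight (x : ℕ → Fin n → ℝ) (k : ℕ) (j : Fin n) (v : ℕ) : ℝ :=
  ∑ i, ∑ s ∈ range k, if s + τ s j i + 1 = k + v then P s j i * x s i else 0

def augState (x : ℕ → Fin n → ℝ) (k : ℕ) : Aug n τbar → ℝ :=
  fun p => if p.2.val = 0 then x k p.1 else inFlight P τ x k p.1 p.2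

variable {τbar P τ}

theorem sendMat_mulVec (k : ℕ) (X : Aug n τbar → ℝ) (j : Fin n) (d : Fin (τbar + 1)) :
    (sendMat τbar P τ k *ᵥ X) (j, d) = ∑ i, if τ k j i = d.val then P k j i * X (i, 0) else 0 := by
  simp only [sendMat, mulVec, dotProduct, of_apply, Fintype.sum_prod_type, ite_mul, zero_mul]
  refine sum_congr rfl fun i _ => ?_
  rw [Fin.sum_univ_succ]
  simp

theorem shiftMat_mulVec (X : Aug n τbar → ℝ) (j : Fin n) (d : Fin (τbar + 1)) :
    (shiftMat τbar *ᵥ X) (j, d) =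
      ∑ e : Fin (τbar + 1), if e.val = d.val + 1 then X (j, e) else 0 := by
  simp [shiftMat, mulVec, dotProduct, Fintype.sum_prod_type, ite_and]

theorem inFlight_succ (x : ℕ → Fin n → ℝ) (k : ℕ) (j : Fin n) (v : ℕ) :
    inFlight P τ x (k + 1) j v =
      (∑ i, if τ k j i = v then P k j i * x k i else 0) + inFlight P τ x k j (v + 1) := by
  simp only [inFlight, ← sum_add_distrib, sum_range_succ]
  refine sum_congr rfl fun i _ => ?_
  rw [add_comm]
  congr 1
  · refine if_congr ?_ rfl rfl
    omega
  · refine sum_congr rfl fun s _ => if_congr ?_ rfl rfl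
    omega

theorem inFlight_eq_zero (hτ : ∀ k j i, τ k j i ≤ τbar) (x : ℕ → Fin n → ℝ) (k : ℕ) (j : Fin n)
    {v : ℕ} (hv : τbar < v) : inFlight P τ x k j v = 0 :=
  sum_eq_zero fun i _ => sum_eq_zero fun s hs => if_neg (by have := hτ s j i; simp at hs; omega)

theorem augState_succ {x : ℕ → Fin n → ℝ} (hx : DelayedIterTV P τ x) (k : ℕ) (p : Aug n τbar) :
    augState τbar P τ x (k + 1) p = inFlight P τ x (k + 1) p.1 p.2 := by
  unfold augState
  split_ifs with hp
  · rw [hx, hp]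
    refine sum_congr rfl fun i _ => sum_congr rfl fun s _ => if_congr ?_ rfl rfl
    omega
  · rfl

theorem augState_succ_eq_mulVec (hτ : ∀ k j i, τ k j i ≤ τbar) {x : ℕ → Fin n → ℝ}
    (hx : DelayedIterTV P τ x) (k : ℕ) :
    augState τbar P τ x (k + 1) = augStep τbar P τ k *ᵥ augState τbar P τ x k := by
  ext ⟨j, d⟩
  rw [augState_succ hx, inFlight_succ, augStep, add_mulVec, Pi.add_apply, sendMat_mulVec,
    shiftMat_mulVec]
  congr 1
  calc inFlight P τ x k j (d + 1)
      = if d.val + 1 < τbar + 1 then inFlight P τ x k j (d + 1) else 0 := by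
        split_ifs with h
        · rfl
        · exact inFlight_eq_zero hτ x k j (by omega)
    _ = _ := by
        rw [← sum_fin_ite_val_eq]
        refine sum_congr rfl fun e _ => ?_
        split_ifs with he
        · simp [augState, he]
        · rfl

theorem augState_zero (x : ℕ → Fin n → ℝ) (p : Aug n τbar) :
    augState τbar P τ x 0 p = if p.2.val = 0 then x 0 p.1 else 0 := by
  simp [augState, inFlight]

theorem sum_sendMat_col (hPcol : ∀ k j, ∑ l, P k l j = 1) (hτ : ∀ k j i, τ k j i ≤ τbar)
    (k : ℕ) (q : Aug n τbar) : ∑ p, sendMat τbar P τ k p q = if q.2.val = 0 then 1 else 0 := by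
  simp only [sendMat, of_apply, Fintype.sum_prod_type, ite_and]
  split_ifs with hq
  · simp_rw [eq_comm (a := τ k _ q.1), sum_fin_ite_val_eq,
      if_pos (Nat.lt_succ_of_le (hτ k _ q.1)), hPcol]
  · simp

theorem sum_shiftMat_col (q : Aug n τbar) :
    ∑ p, shiftMat τbar p q = if q.2.val = 0 then 0 else 1 := by
  obtain ⟨i, ⟨_ | v, hv⟩⟩ := q
  · simp [shiftMat]
  · rw [Fintype.sum_eq_single (i, ⟨v, by omega⟩)]
    · simp [shiftMat]
    · rintro ⟨j, d⟩ hp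
      refine if_neg ?_
      rintro ⟨rfl, hd⟩
      exact hp (Prod.ext rfl (Fin.ext (by simp at hd ⊢; omega)))

theorem sum_augStep_col (hPcol : ∀ k j, ∑ l, P k l j = 1) (hτ : ∀ k j i, τ k j i ≤ τbar)
    (k : ℕ) (q : Aug n τbar) : ∑ p, augStep τbar P τ k p q = 1 := by
  simp only [augStep, Matrix.add_apply, sum_add_distrib, sum_sendMat_col hPcol hτ, sum_shiftMat_col]
  split_ifs <;> norm_num

theorem augStep_nonneg (hP0 : ∀ k l j, 0 ≤ P k l j) (k : ℕ) (p q : Aug n τbar) :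
    0 ≤ augStep τbar P τ k p q := by
  simp only [augStep, sendMat, shiftMat, Matrix.add_apply, of_apply]
  have := hP0 k p.1 q.1
  split_ifs <;> linarith

theorem le_augStep_of_pos {α : ℝ} (hPα : ∀ k l j, 0 < P k l j → α ≤ P k l j) (hα : α ≤ 1)
    (k : ℕ) {p q : Aug n τbar} (h : 0 < augStep τbar P τ k p q) : α ≤ augStep τbar P τ k p q := by
  simp only [augStep, sendMat, shiftMat, Matrix.add_apply, of_apply] at h ⊢
  split_ifs at h ⊢ with h1 h2 h2
  · omega
  · simpa using hPα k p.1 q.1 (by simpa using h)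
  · simpa using hα
  · simp at h

theorem augStep_self_pos (hPdiag : ∀ k j, 0 < P k j j) (hτself : ∀ k j, τ k j j = 0) (k : ℕ)
    (i : Fin n) : 0 < augStep τbar P τ k (i, 0) (i, 0) := by
  simpa [augStep, sendMat, shiftMat, hτself] using hPdiag k i

theorem augStep_shift_pos (k : ℕ) (i : Fin n) {v : ℕ} (hv : v + 1 < τbar + 1) :
    0 < augStep τbar P τ k (i, ⟨v, by omega⟩) (i, ⟨v + 1, hv⟩) := by
  simp [augStep, sendMat, shiftMat]

theorem augStep_send_pos (k : ℕ) {l j : Fin n} (hτ : τ k l j < τbar + 1) (h : 0 < P k l j) :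
    0 < augStep τbar P τ k (l, ⟨τ k l j, hτ⟩) (j, 0) := by
  simpa [augStep, sendMat, shiftMat] using h

theorem augTrans_one (k : ℕ) : augTrans τbar P τ k 1 = augStep τbar P τ k := by
  simp [augTrans]

theorem augTrans_add (k m m' : ℕ) :
    augTrans τbar P τ k (m + m') = augTrans τbar P τ (k + m) m' * augTrans τbar P τ k m := by
  induction m' with
  | zero => simp [augTrans]
  | succ m' ih => rw [← add_assoc, augTrans, ih, augTrans, Matrix.mul_assoc, add_assoc]

theorem augState_add (hτ : ∀ k j i, τ k j i ≤ τbar) {x : ℕ → Fin n → ℝ}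
    (hx : DelayedIterTV P τ x) (k m : ℕ) :
    augState τbar P τ x (k + m) = augTrans τbar P τ k m *ᵥ augState τbar P τ x k := by
  induction m with
  | zero => simp [augTrans]
  | succ m ih =>
    rw [← add_assoc, augState_succ_eq_mulVec hτ hx, ih, augTrans, mulVec_mulVec]

theorem augTrans_nonneg (hP0 : ∀ k l j, 0 ≤ P k l j) (k m : ℕ) (p q : Aug n τbar) :
    0 ≤ augTrans τbar P τ k m p q := by
  induction m generalizing p q with
  | zero => rw [augTrans, one_apply]; split_ifs <;> norm_num
  | succ m ih =>
    exact sum_nonneg fun b _ => mul_nonneg (augStep_nonneg hP0 _ p b) (ih b q)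

theorem sum_augTrans_col (hPcol : ∀ k j, ∑ l, P k l j = 1) (hτ : ∀ k j i, τ k j i ≤ τbar)
    (k m : ℕ) (q : Aug n τbar) : ∑ p, augTrans τbar P τ k m p q = 1 := by
  induction m generalizing q with
  | zero => simp [augTrans, one_apply]
  | succ m ih =>
    simp only [augTrans, mul_apply]
    rw [sum_comm]
    simp_rw [← sum_mul, sum_augStep_col hPcol hτ, one_mul, ih]

theorem pow_le_augTrans_of_pos (hP0 : ∀ k l j, 0 ≤ P k l j) {α : ℝ} (hα0 : 0 ≤ α)
    (hα1 : α ≤ 1) (hPα : ∀ k l j, 0 < P k l j → α ≤ P k l j) (k m : ℕ) {p q : Aug n τbar}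
    (h : 0 < augTrans τbar P τ k m p q) : α ^ m ≤ augTrans τbar P τ k m p q := by
  induction m generalizing p q with
  | zero =>
    rw [augTrans, one_apply] at h ⊢
    split_ifs at h ⊢
    · norm_num
    · exact absurd h (lt_irrefl 0)
  | succ m ih =>
    rw [pow_succ']
    exact mul_le_mul_apply_of_pos (augStep_nonneg hP0 _) (augTrans_nonneg hP0 k m)
      (pow_nonneg hα0 m) (fun _ _ => le_augStep_of_pos hPα hα1 _) (fun _ _ => ih) h

theorem augTrans_add_pos (hP0 : ∀ k l j, 0 ≤ P k l j) {k m m' : ℕ} {p b q : Aug n τbar}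
    (h₁ : 0 < augTrans τbar P τ (k + m) m' p b) (h₂ : 0 < augTrans τbar P τ k m b q) :
    0 < augTrans τbar P τ k (m + m') p q := by
  rw [augTrans_add]
  exact mul_apply_pos (augTrans_nonneg hP0 _ _) (augTrans_nonneg hP0 _ _) h₁ h₂

theorem augTrans_self_pos (hP0 : ∀ k l j, 0 ≤ P k l j) (hPdiag : ∀ k j, 0 < P k j j)
    (hτself : ∀ k j, τ k j j = 0) (k m : ℕ) (i : Fin n) :
    0 < augTrans τbar P τ k m (i, 0) (i, 0) := by
  induction m with
  | zero => simp [augTrans]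
  | succ m ih =>
    exact augTrans_add_pos hP0 (by rw [augTrans_one]; exact augStep_self_pos hPdiag hτself _ i) ih

theorem augTrans_pos_of_le (hP0 : ∀ k l j, 0 ≤ P k l j) (hPdiag : ∀ k j, 0 < P k j j)
    (hτself : ∀ k j, τ k j j = 0) {k m m' : ℕ} (hm : m ≤ m') {i : Fin n} {q : Aug n τbar}
    (h : 0 < augTrans τbar P τ k m (i, 0) q) : 0 < augTrans τbar P τ k m' (i, 0) q := by
  obtain ⟨d, rfl⟩ := Nat.exists_eq_add_of_le hm
  exact augTrans_add_pos hP0 (augTrans_self_pos hP0 hPdiag hτself _ d i) h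

theorem augTrans_drain_pos (hP0 : ∀ k l j, 0 ≤ P k l j) (k v : ℕ) (i : Fin n)
    (hv : v < τbar + 1) : 0 < augTrans τbar P τ k v (i, 0) (i, ⟨v, hv⟩) := by
  induction v generalizing k with
  | zero =>
    rw [augTrans, show (⟨0, hv⟩ : Fin (τbar + 1)) = 0 from rfl, one_apply_eq]
    exact one_pos
  | succ v ih =>
    have := augTrans_add_pos hP0 (m := 1) (ih (k + 1) (by omega))
      (by rw [augTrans_one]; exact augStep_shift_pos k i hv)
    rwa [add_comm 1 v] at this

theorem augTrans_pos_of_weight_pos (hP0 : ∀ k l j, 0 ≤ P k l j)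
    (hτ : ∀ k j i, τ k j i ≤ τbar) {s : ℕ} {l j : Fin n} (h : 0 < P s l j) :
    0 < augTrans τbar P τ s (τ s l j + 1) (l, 0) (j, 0) := by
  have hlt : τ s l j < τbar + 1 := Nat.lt_succ_of_le (hτ s l j)
  rw [add_comm]
  exact augTrans_add_pos hP0 (augTrans_drain_pos hP0 (s + 1) _ l hlt)
    (by rw [augTrans_one]; exact augStep_send_pos s hlt h)

variable (τbar P τ) in
noncomputable def reached (k : ℕ) (i : Fin n) (d : ℕ) : Finset (Fin n) :=
  {j | 0 < augTrans τbar P τ k d (j, 0) (i, 0)}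

theorem reached_mono (hP0 : ∀ k l j, 0 ≤ P k l j) (hPdiag : ∀ k j, 0 < P k j j)
    (hτself : ∀ k j, τ k j j = 0) (k : ℕ) (i : Fin n) : Monotone (reached τbar P τ k i) :=
  fun _ _ hd j hj => by
    simp only [reached, mem_filter, mem_univ, true_and] at hj ⊢
    exact augTrans_pos_of_le hP0 hPdiag hτself hd hj

theorem self_mem_reached (hP0 : ∀ k l j, 0 ≤ P k l j) (hPdiag : ∀ k j, 0 < P k j j)
    (hτself : ∀ k j, τ k j j = 0) (k : ℕ) (i : Fin n) (d : ℕ) : i ∈ reached τbar P τ k i d := by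
  simpa [reached] using augTrans_self_pos hP0 hPdiag hτself k d i

theorem reached_ssubset (hP0 : ∀ k l j, 0 ≤ P k l j) (hPdiag : ∀ k j, 0 < P k j j)
    (hτself : ∀ k j, τ k j j = 0) (hτ : ∀ k j i, τ k j i ≤ τbar)
    {E : ℕ → Finset (Fin n × Fin n)} (hPE : ∀ s l j, (l, j) ∈ E s → 0 < P s l j) {a b k : ℕ}
    (hsc : StronglyConnected ((Ico a b).biUnion E)) (hk : k ≤ a) (i : Fin n)
    (hS : reached τbar P τ k i (a - k) ≠ univ) :
    reached τbar P τ k i (a - k) ⊂ reached τbar P τ k i (b + τbar - k) := by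
  obtain ⟨o, ho⟩ : ∃ o, o ∉ reached τbar P τ k i (a - k) := by
    simpa [eq_univ_iff_forall] using hS
  obtain ⟨j, hj, l, hl, hlj⟩ :=
    hsc.exists_edge_out (self_mem_reached hP0 hPdiag hτself k i (a - k)) ho
  obtain ⟨s, hs, hE⟩ := mem_biUnion.mp hlj
  rw [mem_Ico] at hs
  have hsub : reached τbar P τ k i (a - k) ⊆ reached τbar P τ k i (b + τbar - k) :=
    reached_mono hP0 hPdiag hτself k i (by omega)
  refine (ssubset_iff_of_subset hsub).mpr ⟨l, ?_, hl⟩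
  have hjs : 0 < augTrans τbar P τ k (s - k) (j, 0) (i, 0) := by
    simp only [reached, mem_filter, mem_univ, true_and] at hj
    exact augTrans_pos_of_le hP0 hPdiag hτself (by omega) hj
  have hls := augTrans_add_pos hP0 (m := s - k) (by
    rw [show k + (s - k) = s by omega]
    exact augTrans_pos_of_weight_pos hP0 hτ (hPE s l j hE)) hjs
  have := hτ s l j
  simp only [reached, mem_filter, mem_univ, true_and]
  exact augTrans_pos_of_le hP0 hPdiag hτself (by omega) hls

theorem exists_augTrans_pos (hP0 : ∀ k l j, 0 ≤ P k l j) (hPdiag : ∀ k j, 0 < P k j j)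
    (hτself : ∀ k j, τ k j j = 0) (hτ : ∀ k j i, τ k j i ≤ τbar)
    {E : ℕ → Finset (Fin n × Fin n)} (hPE : ∀ s l j, (l, j) ∈ E s → 0 < P s l j)
    {t : ℕ → ℕ} {ℓ : ℕ} (ht0 : t 0 = 0) (htmono : StrictMono t)
    (htℓ : ∀ m, t (m + 1) - t m ≤ ℓ)
    (hsc : ∀ m, StronglyConnected ((Ico (t m) (t (m + 1))).biUnion E)) :
    ∃ D, ∀ k i j, 0 < augTrans τbar P τ k D (j, 0) (i, 0) := by
  refine ⟨ℓ + (n - 1) * ((τbar + 1) * ℓ), fun k i j => ?_⟩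
  obtain ⟨m₀, hk, hm₀⟩ := exists_window_start ht0 htmono htℓ k
  -- Consecutive windows `m₀ + a * (τbar + 1)` are far enough apart for messages to land.
  set S : ℕ → Finset (Fin n) := fun a => reached τbar P τ k i (t (m₀ + a * (τbar + 1)) - k)
  have hSmono : Monotone S := fun a a' ha =>
    reached_mono hP0 hPdiag hτself k i
      (Nat.sub_le_sub_right (htmono.monotone (by gcongr)) k)
  have hSgrow : ∀ a, S a ≠ univ → S a ⊂ S (a + 1) := fun a ha =>
    (reached_ssubset hP0 hPdiag hτself hτ hPE (hsc _)
      (hk.trans (htmono.monotone (Nat.le_add_right _ _))) i ha).trans_subset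
      (reached_mono hP0 hPdiag hτself k i (by
        have := htmono.add_le_nat τbar (m₀ + a * (τbar + 1) + 1)
        rw [show τbar + (m₀ + a * (τbar + 1) + 1) = m₀ + (a + 1) * (τbar + 1) by ring] at this
        omega))
  have hS : S (n - 1) = univ := by
    simpa using eq_univ_of_ssubset_succ hSmono hSgrow ⟨i, self_mem_reached hP0 hPdiag hτself _ _ _⟩
  have hj : j ∈ S (n - 1) := hS ▸ mem_univ j
  simp only [S, reached, mem_filter, mem_univ, true_and] at hj
  refine augTrans_pos_of_le hP0 hPdiag hτself ?_ hj
  have := le_add_mul_of_sub_le htℓ m₀ ((n - 1) * (τbar + 1))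
  rw [mul_assoc] at this
  omega

theorem augTrans_row_pos (hP0 : ∀ k l j, 0 ≤ P k l j) (hPdiag : ∀ k j, 0 < P k j j)
    (hτself : ∀ k j, τ k j j = 0) {D : ℕ} (hD : ∀ k i j, 0 < augTrans τbar P τ k D (j, 0) (i, 0))
    (k : ℕ) (j : Fin n) (q : Aug n τbar) : 0 < augTrans τbar P τ k (τbar + D) (j, 0) q := by
  obtain ⟨i, e⟩ := q
  exact augTrans_add_pos hP0 (hD (k + τbar) i j)
    (augTrans_pos_of_le hP0 hPdiag hτself (Nat.lt_succ_iff.mp e.isLt)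
      (augTrans_drain_pos hP0 k e i e.isLt))

theorem sum_augState (hPcol : ∀ k j, ∑ l, P k l j = 1) (hτ : ∀ k j i, τ k j i ≤ τbar)
    {x : ℕ → Fin n → ℝ} (hx : DelayedIterTV P τ x) (k : ℕ) :
    ∑ p, augState τbar P τ x k p = ∑ j, x 0 j := by
  induction k with
  | zero => simp [augState_zero, Fintype.sum_prod_type]
  | succ k ih =>
    rw [augState_succ_eq_mulVec hτ hx, sum_mulVec_of_sum_col_eq _ (sum_augStep_col hPcol hτ k),
      one_mul, ih]

theorem augState_nonneg (hP0 : ∀ k l j, 0 ≤ P k l j) (hτ : ∀ k j i, τ k j i ≤ τbar)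
    {x : ℕ → Fin n → ℝ} (hx : DelayedIterTV P τ x) (hx0 : ∀ j, 0 ≤ x 0 j) (k : ℕ)
    (p : Aug n τbar) : 0 ≤ augState τbar P τ x k p := by
  rw [← zero_add k, augState_add hτ hx]
  refine sum_nonneg fun q _ => mul_nonneg (augTrans_nonneg hP0 0 k p q) ?_
  rw [augState_zero]
  split_ifs
  exacts [hx0 q.1, le_rfl]

theorem tendsto_sum_abs_augState (hP0 : ∀ k l j, 0 ≤ P k l j)
    (hPcol : ∀ k j, ∑ l, P k l j = 1) (hτ : ∀ k j i, τ k j i ≤ τbar) {B : ℕ} {δ : ℝ}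
    (hδ : 0 < δ) {r : Aug n τbar} (hrow : ∀ k q, δ ≤ augTrans τbar P τ k B r q)
    {x : ℕ → Fin n → ℝ} (hx : DelayedIterTV P τ x) (hx0 : ∑ j, x 0 j = 0) :
    Tendsto (fun k => ∑ p, |augState τbar P τ x k p|) atTop (nhds 0) := by
  have hmass : ∀ k, ∑ p, augState τbar P τ x k p = 0 := fun k => by
    rw [sum_augState hPcol hτ hx, hx0]
  refine tendsto_zero_of_antitone_of_le_mul (fun k => sum_nonneg fun p _ => abs_nonneg _)
    (antitone_nat_of_succ_le fun k => ?_) (sub_lt_self 1 hδ) (B := B) fun k => ?_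
  · simpa [augState_succ_eq_mulVec hτ hx] using
      sum_abs_mulVec_le _ (augStep_nonneg hP0 k) (sum_augStep_col hPcol hτ k)
        (augState τbar P τ x k)
  · rw [augState_add hτ hx]
    exact sum_abs_mulVec_le_of_le_row _ (augTrans_nonneg hP0 k B)
      (sum_augTrans_col hPcol hτ k B) (hrow k) (hmass k)

theorem mul_sum_le_of_le_augTrans_row (hP0 : ∀ k l j, 0 ≤ P k l j) (hPcol : ∀ k j, ∑ l, P k l j = 1)
    (hτ : ∀ k j i, τ k j i ≤ τbar) {B : ℕ} {δ : ℝ} {j : Fin n}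
    (hrow : ∀ k q, δ ≤ augTrans τbar P τ k B (j, 0) q) {x : ℕ → Fin n → ℝ}
    (hx : DelayedIterTV P τ x) (hx0 : ∀ j, 0 ≤ x 0 j) (k : ℕ) :
    δ * ∑ l, x 0 l ≤ x (k + B) j := by
  have := mul_sum_le_mulVec_apply _ (hrow k) (augState_nonneg hP0 hτ hx hx0 k)
  rwa [sum_augState hPcol hτ hx, ← augState_add hτ hx] at this

end DelayedConsensus

open DelayedConsensus

theorem DelayedIterTV.sub_smul {n : ℕ} {P : ℕ → Matrix (Fin n) (Fin n) ℝ}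
    {τ : ℕ → Fin n → Fin n → ℕ} {x x' : ℕ → Fin n → ℝ} (hx : DelayedIterTV P τ x)
    (hx' : DelayedIterTV P τ x') (c : ℝ) : DelayedIterTV P τ (x - c • x') := by
  intro k j
  simp only [Pi.sub_apply, Pi.smul_apply, smul_eq_mul, hx k j, hx' k j, mul_sum,
    ← sum_sub_distrib]
  refine sum_congr rfl fun i _ => sum_congr rfl fun s _ => ?_
  split_ifs <;> ring

theorem DelayedIterTV.pos_of_init_pos {n τbar : ℕ} {P : ℕ → Matrix (Fin n) (Fin n) ℝ}
    {τ : ℕ → Fin n → Fin n → ℕ} (hP0 : ∀ k l j, 0 ≤ P k l j) (hPdiag : ∀ k j, 0 < P k j j)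
    (hτself : ∀ k j, τ k j j = 0) (hτ : ∀ k j i, τ k j i ≤ τbar) {z : ℕ → Fin n → ℝ}
    (hz : DelayedIterTV P τ z) (hz0 : ∀ j, 0 < z 0 j) (k : ℕ) (j : Fin n) : 0 < z k j := by
  have hZ0 := augState_nonneg hP0 hτ hz (fun j => (hz0 j).le) 0
  calc 0 < augTrans τbar P τ 0 k (j, 0) (j, 0) * augState τbar P τ z 0 (j, 0) :=
        mul_pos (augTrans_self_pos hP0 hPdiag hτself 0 k j) (by simpa [augState_zero] using hz0 j)
    _ ≤ (augTrans τbar P τ 0 k *ᵥ augState τbar P τ z 0) (j, 0) :=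
        single_le_sum (f := fun q => augTrans τbar P τ 0 k (j, 0) q * augState τbar P τ z 0 q)
          (fun q _ => mul_nonneg (augTrans_nonneg hP0 0 k _ q) (hZ0 q)) (mem_univ _)
    _ = z k j := by rw [← augState_add hτ hz, zero_add]; simp [augState]

theorem DelayedIterTV.tendsto_div {n τbar : ℕ} {P : ℕ → Matrix (Fin n) (Fin n) ℝ}
    {τ : ℕ → Fin n → Fin n → ℕ} (hP0 : ∀ k l j, 0 ≤ P k l j) (hPcol : ∀ k j, ∑ l, P k l j = 1)
    (hτ : ∀ k j i, τ k j i ≤ τbar) {B : ℕ} {δ : ℝ} (hδ : 0 < δ)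
    (hrow : ∀ k j q, δ ≤ augTrans τbar P τ k B (j, 0) q) {y z : ℕ → Fin n → ℝ}
    (hy : DelayedIterTV P τ y) (hz : DelayedIterTV P τ z) (hz0 : ∀ j, 0 < z 0 j) (j : Fin n) :
    Tendsto (fun k => y k j / z k j) atTop (nhds ((∑ l, y 0 l) / ∑ l, z 0 l)) := by
  set c := (∑ l, y 0 l) / ∑ l, z 0 l
  have hZ : 0 < ∑ l, z 0 l := sum_pos (fun l _ => hz0 l) ⟨j, mem_univ j⟩
  set u := y - c • z
  have hN := tendsto_sum_abs_augState hP0 hPcol hτ hδ (hrow · j) (hy.sub_smul hz c)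
    (by simp [sum_sub_distrib, ← mul_sum, c, hZ.ne'])
  rw [tendsto_iff_norm_sub_tendsto_zero]
  refine squeeze_zero' (Eventually.of_forall fun k => norm_nonneg _)
    ((eventually_ge_atTop B).mono fun k hk => ?_) (by simpa using hN.div_const (δ * ∑ l, z 0 l))
  obtain ⟨k, rfl⟩ := Nat.exists_eq_add_of_le' hk
  have hzk := mul_sum_le_of_le_augTrans_row hP0 hPcol hτ (hrow · j) hz (fun j => (hz0 j).le) k
  have hzpos : 0 < z (k + B) j := (mul_pos hδ hZ).trans_le hzk
  have hu : |u (k + B) j| ≤ ∑ p, |augState τbar P τ u (k + B) p| := by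
    simpa [augState] using single_le_sum (f := fun p => |augState τbar P τ u (k + B) p|)
      (fun p _ => abs_nonneg _) (mem_univ (j, 0))
  have hdiv : y (k + B) j / z (k + B) j - c = u (k + B) j / z (k + B) j := by
    simp only [u, Pi.sub_apply, Pi.smul_apply, smul_eq_mul]
    field_simp
  rw [hdiv, Real.norm_eq_abs, abs_div, abs_of_pos hzpos]
  exact div_le_div₀ (sum_nonneg fun p _ => abs_nonneg _) hu (mul_pos hδ hZ) hzk

theorem statement6_general (n : ℕ)
    (E : ℕ → Finset (Fin n × Fin n))
    (hnoself : ∀ k, ∀ e ∈ E k, e.1 ≠ e.2)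
    (ℓ : ℕ)
    (t : ℕ → ℕ) (ht0 : t 0 = 0) (htmono : StrictMono t)
    (htℓ : ∀ m, t (m + 1) - t m ≤ ℓ)
    (hsc : ∀ m, StronglyConnected ((Finset.Ico (t m) (t (m + 1))).biUnion E))
    (τbar : ℕ) (τ : ℕ → Fin n → Fin n → ℕ)
    (hτle : ∀ k j i, τ k j i ≤ τbar)
    (hτself : ∀ k j, τ k j j = 0)
    (y z : ℕ → Fin n → ℝ) (y0 : Fin n → ℝ)
    (hy0 : y 0 = y0) (hz0 : ∀ j, z 0 j = 1)
    (hy : DelayedIterTV (fun k => degWeights (E k)) τ y)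
    (hz : DelayedIterTV (fun k => degWeights (E k)) τ z) :
    (∀ k j, 0 < z k j) ∧
      ∀ j, Tendsto (fun k => y k j / z k j) atTop (nhds ((∑ l, y0 l) / (n : ℝ))) := by
  set P : ℕ → Matrix (Fin n) (Fin n) ℝ := fun k => degWeights (E k)
  have hP0 : ∀ k l j, 0 ≤ P k l j := fun k => degWeights_nonneg (E k)
  have hPcol : ∀ k j, ∑ l, P k l j = 1 := fun k => sum_degWeights_col (hnoself k)
  have hPdiag : ∀ k j, 0 < P k j j := fun k => degWeights_self_pos (E k)
  have hz0' : ∀ j, 0 < z 0 j := fun j => (hz0 j).symm ▸ one_pos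
  refine ⟨hz.pos_of_init_pos hP0 hPdiag hτself hτle hz0', fun j => ?_⟩
  have hn : (1 : ℝ) ≤ n := Nat.one_le_cast.mpr j.pos
  obtain ⟨D, hD⟩ := exists_augTrans_pos hP0 hPdiag hτself hτle
    (fun _ _ _ => degWeights_pos_of_mem) ht0 htmono htℓ hsc
  have hrow : ∀ k j q, (1 / (n : ℝ)) ^ (τbar + D) ≤ augTrans τbar P τ k (τbar + D) (j, 0) q :=
    fun k j q => pow_le_augTrans_of_pos hP0 (by positivity) (div_le_one_of_le₀ hn (by positivity))
      (fun k _ _ => one_div_le_degWeights_of_pos (hnoself k)) k _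
      (augTrans_row_pos hP0 hPdiag hτself hD k j q)
  simpa [hy0, hz0] using
    hy.tendsto_div hP0 hPcol hτle (pow_pos (by positivity) _) hrow hz hz0' j

theorem statement6 (n : ℕ) (hn : 2 ≤ n)
    (E : ℕ → Finset (Fin n × Fin n))
    (hnoself : ∀ k, ∀ e ∈ E k, e.1 ≠ e.2)
    (ℓ : ℕ) (hℓ : 1 ≤ ℓ)
    (t : ℕ → ℕ) (ht0 : t 0 = 0) (htmono : StrictMono t)
    (htℓ : ∀ m, t (m + 1) - t m ≤ ℓ)
    (hsc : ∀ m, StronglyConnected ((Finset.Ico (t m) (t (m + 1))).biUnion E))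
    (τbar : ℕ) (τ : ℕ → Fin n → Fin n → ℕ)
    (hτle : ∀ k j i, τ k j i ≤ τbar)
    (hτself : ∀ k j, τ k j j = 0)
    (y z : ℕ → Fin n → ℝ) (y0 : Fin n → ℝ)
    (hy0 : y 0 = y0) (hz0 : ∀ j, z 0 j = 1)
    (hy : DelayedIterTV (fun k => degWeights (E k)) τ y)
    (hz : DelayedIterTV (fun k => degWeights (E k)) τ z) :
    (∀ k j, 0 < z k j) ∧
      ∀ j, Tendsto (fun k => y k j / z k j) atTop (nhds ((∑ l, y0 l) / (n : ℝ))) :=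
  statement6_general n E hnoself ℓ t ht0 htmono htℓ hsc τbar τ hτle hτself y z y0 hy0 hz0 hy hz
end
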